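/- arXiv:1610.05343 — 4 statements merged into one kernel-verified Lean document; each statement's English description precedes it below -/
import Mathlib

section
/- For any model knot complexes C₁ and C₂ and any t ∈ (0,2), Υ²_{C₁⊗C₂,t}(t) ≥ min{ Υ²_{C₁,t}(t), Υ²_{C₂,t}(t) }. -/
open scoped BigOperators

/-- A "pre-complex": a finite distinguished basis `B`, a grading `gr`,
bifiltration functions `alg` and `alex`, and a differential recorded by its
matrix `d` over the field `F₂ = ZMod 2`:  `∂ x = ∑ y, d x y • y`. -/
structure PreComplex where
  B : Type
  fB : Fintype B
  dB : DecidableEq B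
  gr : B → ℤ
  alg : B → ℤ
  alex : B → ℤ
  d : B → B → ZMod 2

attribute [instance] PreComplex.fB PreComplex.dB

namespace PreComplex

variable (C : PreComplex)

/-- Chains: F₂-linear combinations of basis elements. -/
abbrev Chain : Type := C.B → ZMod 2

/-- The boundary of a chain, extending `∂ x = ∑ y, d x y • y` linearly. -/
def bdry (c : C.Chain) : C.Chain := fun y => ∑ x, c x * C.d x y

/-- A chain is homogeneous of grading `k`. -/
def isGraded (c : C.Chain) (k : ℤ) : Prop := ∀ x, c x ≠ 0 → C.gr x = k

def isCycle (c : C.Chain) : Prop := C.bdry c = 0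

def isBoundary (c : C.Chain) : Prop := ∃ w : C.Chain, C.bdry w = c

/-- A cycle of grading 0 representing the nonzero class of `H₀(C)`. -/
def GenCycle (z : C.Chain) : Prop :=
  C.isCycle z ∧ C.isGraded z 0 ∧ ¬ C.isBoundary z

/-- The bifiltration level of a basis element. -/
def lev (x : C.B) : ℤ × ℤ := (C.alg x, C.alex x)

/-- A model knot complex: `∂ ∘ ∂ = 0`; `∂` drops the grading by one and does
not increase either filtration; the homology is one dimensional, concentrated
in grading 0; and the minimum over cycles representing the generator of
`H₀(C)` of their maximal `alg` (resp. `alex`) filtration level is 0. -/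
def IsModel : Prop :=
  (∀ x z, (∑ y, C.d x y * C.d y z) = 0) ∧
  (∀ x y, C.d x y ≠ 0 → C.gr y = C.gr x - 1 ∧ C.alg y ≤ C.alg x ∧ C.alex y ≤ C.alex x) ∧
  (∀ k : ℤ, k ≠ 0 → ∀ z : C.Chain, C.isCycle z → C.isGraded z k → C.isBoundary z) ∧
  (∃ z : C.Chain, C.GenCycle z) ∧
  (∀ z z' : C.Chain, C.GenCycle z → C.GenCycle z' → C.isBoundary (z + z')) ∧
  (∃ z : C.Chain, C.GenCycle z ∧ ∀ x, z x ≠ 0 → C.alg x ≤ 0) ∧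
  (∀ z : C.Chain, C.GenCycle z → ∃ x, z x ≠ 0 ∧ 0 ≤ C.alg x) ∧
  (∃ z : C.Chain, C.GenCycle z ∧ ∀ x, z x ≠ 0 → C.alex x ≤ 0) ∧
  (∀ z : C.Chain, C.GenCycle z → ∃ x, z x ≠ 0 ∧ 0 ≤ C.alex x)

/-- An acyclic complex: conditions (i) and (ii) hold but the homology vanishes. -/
def IsAcyclic : Prop :=
  (∀ x z, (∑ y, C.d x y * C.d y z) = 0) ∧
  (∀ x y, C.d x y ≠ 0 → C.gr y = C.gr x - 1 ∧ C.alg y ≤ C.alg x ∧ C.alex y ≤ C.alex x) ∧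
  (∀ z : C.Chain, C.isCycle z → C.isBoundary z)

end PreComplex

/-- `f_t(i,j) = (t/2)·j + (1 − t/2)·i`. -/
noncomputable def fval (t : ℝ) (p : ℤ × ℤ) : ℝ :=
  (t / 2) * (p.2 : ℝ) + (1 - t / 2) * (p.1 : ℝ)

namespace PreComplex

variable (C : PreComplex)

/-- A chain lies in the subcomplex `F_{t,s}`. -/
def inF (t s : ℝ) (c : C.Chain) : Prop :=
  ∀ x, c x ≠ 0 → fval t (C.lev x) ≤ s

/-- `γ_C(t)`: the minimal `s` such that `H₀(F_{t,s}) → H₀(C)` is surjective,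
i.e. such that `F_{t,s}` contains a cycle representing the generator. -/
noncomputable def gamma (t : ℝ) : ℝ :=
  sInf {s : ℝ | ∃ z : C.Chain, C.GenCycle z ∧ C.inF t s z}

/-- The Upsilon invariant `Υ_C(t) = −2 γ_C(t)`. -/
noncomputable def Upsilon (t : ℝ) : ℝ := -2 * C.gamma t

/-- `P`: the set of bifiltration levels of basis elements. -/
def PSet : Set (ℤ × ℤ) := Set.range C.lev

/-- `P_u = { p ∈ P : f_u(p) = γ_C(u) }`. -/
def Pt (u : ℝ) : Set (ℤ × ℤ) := {p ∈ C.PSet | fval u p = C.gamma u}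

/-- `p` is the negative pivot point of `C` at `t`. -/
def IsNegPivot (t : ℝ) (p : ℤ × ℤ) : Prop :=
  ∃ δ₀ > (0 : ℝ), ∀ δ : ℝ, 0 < δ → δ < δ₀ → C.Pt (t - δ) ∩ C.Pt t = {p}

/-- `p` is the positive pivot point of `C` at `t`. -/
def IsPosPivot (t : ℝ) (p : ℤ × ℤ) : Prop :=
  ∃ δ₀ > (0 : ℝ), ∀ δ : ℝ, 0 < δ → δ < δ₀ → C.Pt (t + δ) ∩ C.Pt t = {p}

/-- Cycles in `F_{t−δ, γ_C(t−δ)}` representing the nonzero class of `H₀(C)`. -/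
def ZminusAt (t δ : ℝ) : Set C.Chain :=
  {z | C.GenCycle z ∧ C.inF (t - δ) (C.gamma (t - δ)) z}

/-- Cycles in `F_{t+δ, γ_C(t+δ)}` representing the nonzero class of `H₀(C)`. -/
def ZplusAt (t δ : ℝ) : Set C.Chain :=
  {z | C.GenCycle z ∧ C.inF (t + δ) (C.gamma (t + δ)) z}

/-- `Z⁻`: the (eventual, for all sufficiently small `δ > 0`) set of cycles in
`F_{t−δ, γ_C(t−δ)}` representing the nonzero class of `H₀(C)`. -/
def Zminus (t : ℝ) : Set C.Chain :=
  {z | ∃ δ₀ > (0 : ℝ), ∀ δ : ℝ, 0 < δ → δ < δ₀ → z ∈ C.ZminusAt t δ}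

/-- `Z⁺`: the (eventual, for all sufficiently small `δ > 0`) set of cycles in
`F_{t+δ, γ_C(t+δ)}` representing the nonzero class of `H₀(C)`. -/
def Zplus (t : ℝ) : Set C.Chain :=
  {z | ∃ δ₀ > (0 : ℝ), ∀ δ : ℝ, 0 < δ → δ < δ₀ → z ∈ C.ZplusAt t δ}

/-- A basis element lies in the subcomplex `F_{t,γ_C(t)} + F_{s,r}`. -/
def inRegion (t s r : ℝ) (x : C.B) : Prop :=
  fval t (C.lev x) ≤ C.gamma t ∨ fval s (C.lev x) ≤ r

/-- `z` and `z'` represent the same homology class in `H₀(F_{t,γ_C(t)} + F_{s,r})`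
(over F₂ the difference `z − z'` is `z + z'`). -/
def sameClass (t s r : ℝ) (z z' : C.Chain) : Prop :=
  (∀ x, z x ≠ 0 → C.inRegion t s r x) ∧
  (∀ x, z' x ≠ 0 → C.inRegion t s r x) ∧
  ∃ w : C.Chain, (∀ x, w x ≠ 0 → C.inRegion t s r x) ∧ C.bdry w = z + z'

/-- The set of `r` for which some `z⁻ ∈ Z⁻` and `z⁺ ∈ Z⁺` represent the same
class in `H₀(F_{t,γ_C(t)} + F_{s,r})`. -/
def gamma2Set (t s : ℝ) : Set ℝ :=
  {r | ∃ zm ∈ C.Zminus t, ∃ zp ∈ C.Zplus t, C.sameClass t s r zm zp}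

/-- `γ²_{C,t}(s)`, as an extended real: the minimum of `gamma2Set`
(`−∞` if the condition holds for every `r`). -/
noncomputable def gamma2 (t s : ℝ) : EReal :=
  sInf ((fun r : ℝ => (r : EReal)) '' C.gamma2Set t s)

/-- `Υ²_{C,t}(s) = −2 (γ²_{C,t}(s) − γ_C(t))`. -/
noncomputable def Upsilon2 (t s : ℝ) : EReal :=
  (-2 : EReal) * (C.gamma2 t s - (C.gamma t : EReal))

end PreComplex

/-- The jump of the derivative of `f` at `t`: the right-hand derivative minus
the left-hand derivative. -/
noncomputable def derivJump (f : ℝ → ℝ) (t : ℝ) : ℝ :=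
  derivWithin f (Set.Ici t) t - derivWithin f (Set.Iic t) t

/-- Direct sum of two pre-complexes. -/
def PreComplex.dsum (C A : PreComplex) : PreComplex where
  B := C.B ⊕ A.B
  fB := inferInstance
  dB := inferInstance
  gr := Sum.elim C.gr A.gr
  alg := Sum.elim C.alg A.alg
  alex := Sum.elim C.alex A.alex
  d := fun x y =>
    match x, y with
    | Sum.inl x, Sum.inl y => C.d x y
    | Sum.inr x, Sum.inr y => A.d x y
    | _, _ => 0

/-- Tensor product of two pre-complexes. -/
def PreComplex.tensor (C₁ C₂ : PreComplex) : PreComplex where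
  B := C₁.B × C₂.B
  fB := inferInstance
  dB := inferInstance
  gr := fun x => C₁.gr x.1 + C₂.gr x.2
  alg := fun x => C₁.alg x.1 + C₂.alg x.2
  alex := fun x => C₁.alex x.1 + C₂.alex x.2
  d := fun x y =>
    (if x.2 = y.2 then C₁.d x.1 y.1 else 0) + (if x.1 = y.1 then C₂.d x.2 y.2 else 0)

/-- An isomorphism of pre-complexes: a bijection of the distinguished bases
preserving `gr`, `alg`, `alex`, whose linear extension commutes with the
differentials. -/
def PreComplex.Iso (C₁ C₂ : PreComplex) : Prop :=
  ∃ e : C₁.B ≃ C₂.B,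
    (∀ x, C₂.gr (e x) = C₁.gr x) ∧
    (∀ x, C₂.alg (e x) = C₁.alg x) ∧
    (∀ x, C₂.alex (e x) = C₁.alex x) ∧
    (∀ x y, C₂.d (e x) (e y) = C₁.d x y)

/-- Stable equivalence of pre-complexes: isomorphism after adding acyclic
summands. -/
def PreComplex.StablyEquiv (C₁ C₂ : PreComplex) : Prop :=
  ∃ A₁ A₂ : PreComplex, A₁.IsAcyclic ∧ A₂.IsAcyclic ∧ (C₁.dsum A₁).Iso (C₂.dsum A₂)

/-!
Over `F₂` a model complex contracts onto the span of a generating cycle, so by Künneth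
`z₁ ⊗ z₂` generates `H₀(C₁ ⊗ C₂)` and, for dual cocycles `ψᵢ` supported at levels `≥ γ_{Cᵢ}(u)`,
the cocycle `ψ₁ ⊗ ψ₂` pairs to `1` with every generating cycle of `C₁ ⊗ C₂`. Hence
`γ_{C₁⊗C₂} = γ_{C₁} + γ_{C₂}`, and `z₁ ⊗ z₂ ∈ Z^±(C₁ ⊗ C₂)` for `zᵢ ∈ Z^±(Cᵢ)`; continuity of
`γ` puts `Z^±(Cᵢ)` inside `F_{t,γ_{Cᵢ}(t)}`.

If `∂ w₁ = z₁⁻ + z₁⁺` with `w₁ ∈ F_{t, max(γ₁, ρ₁)}` and `∂ w₂ = z₂⁻ + z₂⁺` with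
`w₂ ∈ F_{t, max(γ₂, ρ₂)}`, then `∂ (w₁ ⊗ z₂⁻ + z₁⁺ ⊗ w₂) = z₁⁻ ⊗ z₂⁻ + z₁⁺ ⊗ z₂⁺`, and this
homotopy lies in `F_{t, max(γ₁ + γ₂, ρ₁ + γ₂, γ₁ + ρ₂)}`. Therefore
`γ²_{C₁⊗C₂,t}(t) − γ_{C₁⊗C₂}(t) ≤ max (γ²_{C₁,t}(t) − γ₁(t)) (γ²_{C₂,t}(t) − γ₂(t))`,
and multiplying by `−2` gives the claim.
-/

open Matrix Filter Topology

lemma ZMod.eq_one_of_ne_zero_two {a : ZMod 2} (h : a ≠ 0) : a = 1 := by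
  revert a
  decide

lemma sInf_le_max_sInf {α : Type*} [CompleteLinearOrder α] {A B D : Set α}
    (h : ∀ a ∈ A, ∀ b ∈ B, max a b ∈ D) : sInf D ≤ max (sInf A) (sInf B) := by
  by_contra! hlt
  obtain ⟨a, ha, hal⟩ := sInf_lt_iff.1 ((le_max_left _ _).trans_lt hlt)
  obtain ⟨b, hb, hbl⟩ := sInf_lt_iff.1 ((le_max_right _ _).trans_lt hlt)
  exact (sInf_le (h a ha b hb)).not_gt (max_lt hal hbl)

lemma EReal.sInf_image_coe_sub (S : Set ℝ) (c : ℝ) :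
    sInf ((fun r : ℝ => (r : EReal)) '' S) - c =
      sInf ((fun r : ℝ => ((r - c : ℝ) : EReal)) '' S) := by
  have hcont : ∀ x : EReal, ContinuousAt (fun x : EReal => x - c) x := fun x =>
    ContinuousAt.comp (f := fun y : EReal => (y, ((-c : ℝ) : EReal)))
      (g := fun p : EReal × EReal => p.1 + p.2)
      (EReal.continuousAt_add (Or.inr (EReal.coe_ne_bot _)) (Or.inr (EReal.coe_ne_top _)))
      (continuous_id.prodMk continuous_const).continuousAt
  have hmono : Monotone fun x : EReal => x - c := fun a b h => EReal.sub_le_sub h le_rfl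
  rw [hmono.map_sInf_of_continuousAt (hcont _) (EReal.top_sub_coe c), Set.image_image]
  rfl

lemma EReal.antitone_neg_two_mul : Antitone fun x : EReal => (-2 : EReal) * x := fun a b h => by
  simpa only [mul_comm (-2 : EReal)] using EReal.mul_le_mul_of_nonpos_right h (by norm_num)

namespace PreComplex

variable {C C₁ C₂ : PreComplex}

/-! ### Homology of a model complex -/

def dMat (C : PreComplex) : Matrix C.B C.B (ZMod 2) := Matrix.of C.d

lemma bdry_eq_vecMul (c : C.Chain) : C.bdry c = c ᵥ* C.dMat := rfl

noncomputable def bdryₗ (C : PreComplex) : C.Chain →ₗ[ZMod 2] C.Chain :=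
  Matrix.vecMulLinear C.dMat

lemma bdryₗ_apply (c : C.Chain) : C.bdryₗ c = C.bdry c := rfl

lemma isBoundary_iff_mem_range {c : C.Chain} :
    C.isBoundary c ↔ c ∈ LinearMap.range C.bdryₗ := Iff.rfl

lemma bdry_add (p q : C.Chain) : C.bdry (p + q) = C.bdry p + C.bdry q := add_vecMul C.dMat p q

lemma bdry_zero : C.bdry (0 : C.Chain) = 0 := zero_vecMul C.dMat

lemma bdry_dotProduct (c ψ : C.Chain) : C.bdry c ⬝ᵥ ψ = c ⬝ᵥ (C.dMat *ᵥ ψ) :=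
  (dotProduct_mulVec c C.dMat ψ).symm

lemma isBoundary_add {p q : C.Chain} (hp : C.isBoundary p) (hq : C.isBoundary q) :
    C.isBoundary (p + q) :=
  Submodule.add_mem (LinearMap.range C.bdryₗ) hp hq

lemma GenCycle.ne_zero {z : C.Chain} (hz : C.GenCycle z) : z ≠ 0 := by
  rintro rfl
  exact hz.2.2 ⟨0, bdry_zero⟩

lemma IsModel.exists_genCycle (hM : C.IsModel) : ∃ z, C.GenCycle z := hM.2.2.2.1

lemma IsModel.isBoundary_add_of_genCycle (hM : C.IsModel) {z z' : C.Chain} (hz : C.GenCycle z)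
    (hz' : C.GenCycle z') : C.isBoundary (z + z') :=
  hM.2.2.2.2.1 z z' hz hz'

lemma IsModel.bdry_bdry (hM : C.IsModel) (c : C.Chain) : C.bdry (C.bdry c) = 0 := by
  have hdd : C.dMat * C.dMat = 0 := Matrix.ext fun x z => hM.1 x z
  rw [bdry_eq_vecMul, bdry_eq_vecMul, vecMul_vecMul, hdd, vecMul_zero]

lemma IsModel.gr_of_d_ne_zero (hM : C.IsModel) {x y : C.B} (h : C.d x y ≠ 0) :
    C.gr y = C.gr x - 1 :=
  (hM.2.1 x y h).1

def gpart (C : PreComplex) (k : ℤ) (c : C.Chain) : C.Chain :=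
  fun x => if C.gr x = k then c x else 0

lemma gpart_isGraded (k : ℤ) (c : C.Chain) : C.isGraded (C.gpart k c) k := by
  intro x hx
  by_contra hk
  exact hx (if_neg hk)

lemma gpart_of_isGraded {k : ℤ} {c : C.Chain} (h : C.isGraded c k) : C.gpart k c = c := by
  funext x
  by_cases hc : c x = 0
  · simp [gpart, hc]
  · simp [gpart, h x hc]

lemma gpart_add (k : ℤ) (p q : C.Chain) : C.gpart k (p + q) = C.gpart k p + C.gpart k q := by
  funext x
  by_cases h : C.gr x = k <;> simp [gpart, h]

lemma sum_gpart {s : Finset ℤ} (hs : ∀ x, C.gr x ∈ s) (c : C.Chain) :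
    ∑ k ∈ s, C.gpart k c = c := by
  funext x
  simp [gpart, Finset.sum_apply, hs x]

lemma IsModel.bdry_gpart (hM : C.IsModel) (k : ℤ) (c : C.Chain) :
    C.bdry (C.gpart (k + 1) c) = C.gpart k (C.bdry c) := by
  funext y
  simp only [bdry, gpart]
  split_ifs with hy
  · refine Finset.sum_congr rfl fun x _ => ?_
    by_cases hd : C.d x y = 0
    · simp [hd]
    · simp [show C.gr x = k + 1 by have := hM.gr_of_d_ne_zero hd; omega]
  · refine Finset.sum_eq_zero fun x _ => ?_
    by_cases hd : C.d x y = 0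
    · simp [hd]
    · simp [show C.gr x ≠ k + 1 by have := hM.gr_of_d_ne_zero hd; omega]

lemma IsModel.gpart_isCycle (hM : C.IsModel) {c : C.Chain} (hc : C.isCycle c) (k : ℤ) :
    C.isCycle (C.gpart k c) := by
  have h := hM.bdry_gpart (k - 1) c
  rw [sub_add_cancel] at h
  rw [isCycle, h, hc]
  funext x
  simp [gpart]

lemma IsModel.exists_isBoundary_add_smul (hM : C.IsModel) {z₀ c : C.Chain}
    (hz₀ : C.GenCycle z₀) (hc : C.isCycle c) : ∃ ε : ZMod 2, C.isBoundary (c + ε • z₀) := by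
  classical
  set s := insert 0 (Finset.univ.image C.gr)
  have hsplit : C.gpart 0 c + ∑ k ∈ s.erase 0, C.gpart k c = c :=
    (Finset.add_sum_erase s _ (Finset.mem_insert_self 0 _)).trans
      (sum_gpart (fun x => by simp [s]) c)
  have hrest : C.isBoundary (∑ k ∈ s.erase 0, C.gpart k c) :=
    isBoundary_iff_mem_range.2 <| Submodule.sum_mem _ fun k hk =>
      hM.2.2.1 k (Finset.ne_of_mem_erase hk) _ (hM.gpart_isCycle hc k) (gpart_isGraded k c)
  by_cases h0 : C.isBoundary (C.gpart 0 c)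
  · exact ⟨0, by rw [zero_smul, add_zero, ← hsplit]; exact isBoundary_add h0 hrest⟩
  · refine ⟨1, ?_⟩
    have := hM.isBoundary_add_of_genCycle ⟨hM.gpart_isCycle hc 0, gpart_isGraded 0 c, h0⟩ hz₀
    rw [one_smul, ← hsplit, add_right_comm]
    exact isBoundary_add this hrest

def IsDualCocycle (C : PreComplex) (ψ : C.Chain) : Prop :=
  C.dMat *ᵥ ψ = 0 ∧ ∀ z, C.GenCycle z → z ⬝ᵥ ψ = 1

lemma IsDualCocycle.bdry_dotProduct {ψ : C.Chain} (hψ : C.IsDualCocycle ψ) (w : C.Chain) :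
    C.bdry w ⬝ᵥ ψ = 0 := by
  rw [PreComplex.bdry_dotProduct, hψ.1, dotProduct_zero]

lemma IsModel.isBoundary_add_dotProduct_smul (hM : C.IsModel) {ψ z₀ c : C.Chain}
    (hψ : C.IsDualCocycle ψ) (hz₀ : C.GenCycle z₀) (hc : C.isCycle c) :
    C.isBoundary (c + (c ⬝ᵥ ψ) • z₀) := by
  obtain ⟨ε, w, hw⟩ := hM.exists_isBoundary_add_smul hz₀ hc
  have hε : c ⬝ᵥ ψ = ε := by
    have h0 := hψ.bdry_dotProduct w
    rw [hw, add_dotProduct, smul_dotProduct, hψ.2 z₀ hz₀, smul_eq_mul, mul_one] at h0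
    exact CharTwo.add_eq_zero.1 h0
  rw [hε]
  exact ⟨w, hw⟩

/-- A contraction of `C` onto the span of `z₀`. With a section `s` of `∂` onto the
boundaries and `σ = s ∘ ∂`, the chain `v + σ v` is a cycle, so it is a boundary up to a
multiple of `z₀`; `h` applies `s` to that boundary. -/
lemma IsModel.exists_homotopy (hM : C.IsModel) {ψ z₀ : C.Chain} (hψ : C.IsDualCocycle ψ)
    (hz₀ : C.GenCycle z₀) :
    ∃ (h : C.Chain →ₗ[ZMod 2] C.Chain) (θ : C.Chain →ₗ[ZMod 2] ZMod 2),
      (∀ v, C.bdry (h v) + h (C.bdry v) = v + θ v • z₀) ∧ ∀ v, θ (C.bdry v) = 0 := by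
  obtain ⟨s, hs⟩ := C.bdryₗ.rangeRestrict.exists_rightInverse_of_surjective
    (LinearMap.range_rangeRestrict _)
  have hbdry_s : ∀ b, C.bdry (s b) = b := fun b => congrArg Subtype.val (LinearMap.congr_fun hs b)
  set σ := s ∘ₗ C.bdryₗ.rangeRestrict
  set L := LinearMap.id + σ
  set P := L + ((dotProductEquiv (ZMod 2) C.B ψ) ∘ₗ L).smulRight z₀
  have hP : ∀ v, P v ∈ LinearMap.range C.bdryₗ := fun v => by
    have hcyc : C.isCycle (L v) := by
      simp only [isCycle, L, σ, LinearMap.add_apply, LinearMap.id_apply, LinearMap.comp_apply,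
        bdry_add, hbdry_s]
      exact ZModModule.add_self _
    convert isBoundary_iff_mem_range.1 (hM.isBoundary_add_dotProduct_smul hψ hz₀ hcyc) using 1
    simp [P, dotProduct_comm ψ]
  have hL_bdry : ∀ v, L (C.bdry v) = C.bdry v := fun v => by
    have hσ : σ (C.bdry v) = 0 := by
      simp only [σ, LinearMap.comp_apply]
      rw [show C.bdryₗ.rangeRestrict (C.bdry v) = 0 from Subtype.ext (hM.bdry_bdry v), map_zero]
    simp [L, hσ]
  have hψ_bdry : ∀ v, ψ ⬝ᵥ C.bdry v = 0 := fun v => by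
    rw [dotProduct_comm, hψ.bdry_dotProduct]
  have hP_bdry : ∀ v, P (C.bdry v) = C.bdry v := fun v => by
    simp [P, hL_bdry, hψ_bdry]
  refine ⟨s ∘ₗ P.codRestrict _ hP, dotProductEquiv (ZMod 2) C.B ψ ∘ₗ L, fun v => ?_,
    fun v => by simp [hL_bdry, hψ_bdry]⟩
  have hcod : P.codRestrict _ hP (C.bdry v) = C.bdryₗ.rangeRestrict v :=
    Subtype.ext (hP_bdry v)
  simp only [LinearMap.comp_apply, hbdry_s, hcod]
  simp only [P, L, LinearMap.add_apply, LinearMap.id_apply, LinearMap.smulRight_apply,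
    LinearMap.comp_apply, dotProductEquiv_apply_apply, LinearMap.codRestrict_apply]
  change v + σ v + _ + σ v = _
  rw [add_right_comm, add_assoc v, ZModModule.add_self, add_zero]

/-! ### The invariant `γ` -/

lemma inF_mono {u s s' : ℝ} {c : C.Chain} (h : C.inF u s c) (hs : s ≤ s') : C.inF u s' c :=
  fun x hx => (h x hx).trans hs

lemma inF_add {u s : ℝ} {p q : C.Chain} (hp : C.inF u s p) (hq : C.inF u s q) :
    C.inF u s (p + q) := fun x hx => by
  by_cases hpx : p x = 0
  · exact hq x (by simpa [hpx] using hx)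
  · exact hp x hpx

def gammaSet (C : PreComplex) (u : ℝ) : Set ℝ := {s | ∃ z, C.GenCycle z ∧ C.inF u s z}

lemma bddBelow_gammaSet (u : ℝ) : BddBelow (C.gammaSet u) := by
  obtain ⟨m, hm⟩ := (Set.finite_range fun x => fval u (C.lev x)).bddBelow
  refine ⟨m, ?_⟩
  rintro s ⟨z, hz, hzs⟩
  obtain ⟨x, hx⟩ := Function.ne_iff.1 hz.ne_zero
  exact (hm ⟨x, rfl⟩).trans (hzs x hx)

lemma isClosed_gammaSet (u : ℝ) : IsClosed (C.gammaSet u) := by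
  have : C.gammaSet u =
      ⋃ z ∈ {z | C.GenCycle z}, ⋂ x ∈ {x | z x ≠ 0}, Set.Ici (fval u (C.lev x)) := by
    ext s
    simp [gammaSet, inF]
  rw [this]
  exact (Set.toFinite _).isClosed_biUnion fun z _ => isClosed_biInter fun x _ => isClosed_Ici

lemma gamma_le {u s : ℝ} {z : C.Chain} (hz : C.GenCycle z) (hzs : C.inF u s z) :
    C.gamma u ≤ s :=
  csInf_le (bddBelow_gammaSet u) ⟨z, hz, hzs⟩

lemma exists_genCycle_inF_gamma (hex : ∃ z, C.GenCycle z) (u : ℝ) :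
    ∃ z, C.GenCycle z ∧ C.inF u (C.gamma u) z := by
  obtain ⟨z, hz⟩ := hex
  obtain ⟨M, hM⟩ := (Set.finite_range fun x => fval u (C.lev x)).bddAbove
  exact (isClosed_gammaSet u).csInf_mem ⟨M, z, hz, fun x _ => hM ⟨x, rfl⟩⟩
    (bddBelow_gammaSet u)

lemma exists_gamma_le_fval {z : C.Chain} (hz : C.GenCycle z) (u : ℝ) :
    ∃ x, z x ≠ 0 ∧ C.gamma u ≤ fval u (C.lev x) := by
  by_contra! h
  set S := Finset.univ.filter fun x => z x ≠ 0
  set f := fun x => fval u (C.lev x)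
  have hne : S.Nonempty := by
    simpa [S, Finset.filter_nonempty_iff] using Function.ne_iff.1 hz.ne_zero
  have hlt : S.sup' hne f < C.gamma u :=
    (Finset.sup'_lt_iff hne).2 fun x hx => h x (Finset.mem_filter.1 hx).2
  have hle : C.gamma u ≤ S.sup' hne f :=
    gamma_le hz fun x hx => S.le_sup' f (Finset.mem_filter.2 ⟨Finset.mem_univ x, hx⟩)
  exact hle.not_gt hlt

lemma abs_fval_sub_fval (u t : ℝ) (p : ℤ × ℤ) :
    |fval u p - fval t p| = |u - t| * |(p.2 : ℝ) - p.1| / 2 := by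
  rw [show fval u p - fval t p = (u - t) * ((p.2 : ℝ) - p.1) / 2 by unfold fval; ring,
    abs_div, abs_mul, abs_two]

/-- `γ_C` is Lipschitz, with constant `∑ₓ |Alex x − alg x|`. -/
lemma continuous_gamma (hex : ∃ z, C.GenCycle z) : Continuous C.gamma := by
  set K := ∑ x, |(C.alex x : ℝ) - C.alg x|
  refine (LipschitzWith.of_le_add_mul' K fun u t => ?_).continuous
  obtain ⟨z, hz, hzt⟩ := exists_genCycle_inF_gamma hex t
  refine gamma_le hz fun x hx => ?_
  have hdiff := (le_abs_self _).trans (abs_fval_sub_fval u t (C.lev x)).le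
  have hK : |(C.alex x : ℝ) - C.alg x| ≤ K :=
    Finset.single_le_sum (f := fun x => |(C.alex x : ℝ) - C.alg x|)
      (fun _ _ => abs_nonneg _) (Finset.mem_univ x)
  have hzx := hzt x hx
  simp only [lev] at hdiff hzx ⊢
  rw [Real.dist_eq]
  nlinarith [abs_nonneg (u - t), abs_nonneg ((C.alex x : ℝ) - C.alg x)]

/-- The generator of `H₀(C)` has no representative below level `γ_C(u)`, so a functional
separating it from the boundaries and the chains below that level is a dual cocycle
supported at levels `≥ γ_C(u)`. -/
lemma IsModel.exists_isDualCocycle (hM : C.IsModel) (u : ℝ) :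
    ∃ ψ, C.IsDualCocycle ψ ∧ ∀ a, ψ a ≠ 0 → C.gamma u ≤ fval u (C.lev a) := by
  classical
  obtain ⟨z₀, hz₀⟩ := hM.exists_genCycle
  set low : Submodule (ZMod 2) C.Chain :=
    Submodule.pi {x | C.gamma u ≤ fval u (C.lev x)} fun _ => ⊥
  have hsep : z₀ ∉ LinearMap.range C.bdryₗ ⊔ low := by
    intro hmem
    obtain ⟨_, ⟨w, rfl⟩, v, hv, hsum⟩ := Submodule.mem_sup.1 hmem
    have hv₀ : C.gpart 0 v = z₀ + C.bdry (C.gpart (0 + 1) w) := by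
      rw [hM.bdry_gpart, ← gpart_of_isGraded hz₀.2.1, ← gpart_add, ← hsum, bdryₗ_apply,
        add_right_comm, ZModModule.add_self, zero_add]
    have hgen : C.GenCycle (C.gpart 0 v) := by
      refine ⟨?_, gpart_isGraded 0 v, fun ⟨q, hq⟩ => hz₀.2.2 ⟨q + C.gpart (0 + 1) w, ?_⟩⟩
      · rw [isCycle, hv₀, bdry_add, hz₀.1, hM.bdry_bdry, add_zero]
      · rw [bdry_add, hq, hv₀, add_assoc, ZModModule.add_self, add_zero]
    obtain ⟨x, hx, hγx⟩ := exists_gamma_le_fval hgen u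
    have hvx : v x = 0 := Submodule.mem_pi.1 hv x hγx
    exact hx (by simp [gpart, hvx])
  obtain ⟨f, hfz₀, hf⟩ := Submodule.exists_dual_map_eq_bot_of_notMem hsep inferInstance
  have hf0 : ∀ c ∈ LinearMap.range C.bdryₗ ⊔ low, f c = 0 := fun c hc => by
    have hfc := Submodule.mem_map_of_mem (f := f) hc
    rwa [hf, Submodule.mem_bot] at hfc
  set ψ := (dotProductEquiv (ZMod 2) C.B).symm f
  have hfψ : ∀ c, f c = c ⬝ᵥ ψ := fun c => by
    rw [dotProduct_comm, ← dotProductEquiv_apply_apply, LinearEquiv.apply_symm_apply]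
  have hsingle : ∀ a, f (Pi.single a 1) = ψ a := fun a => by
    rw [hfψ, single_dotProduct, one_mul]
  refine ⟨ψ, ⟨funext fun a => ?_, fun z hz => ?_⟩, fun a ha => ?_⟩
  · rw [Pi.zero_apply, ← one_mul ((C.dMat *ᵥ ψ) a), ← single_dotProduct,
      ← PreComplex.bdry_dotProduct, ← hfψ]
    exact hf0 _ <| Submodule.mem_sup_left ⟨Pi.single a 1, rfl⟩
  · obtain ⟨w, hw⟩ := hM.isBoundary_add_of_genCycle hz hz₀
    have hfz : f z = f z₀ := by
      rw [← ZModModule.sub_eq_add] at hw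
      rw [sub_eq_iff_eq_add'.1 hw.symm, map_add, hf0 (C.bdry w) (Submodule.mem_sup_left ⟨w, rfl⟩),
        add_zero]
    rw [← hfψ, hfz, ZMod.eq_one_of_ne_zero_two hfz₀]
  · by_contra! hlt
    refine ha ((hsingle a).symm.trans (hf0 _ (Submodule.mem_sup_right ?_)))
    refine Submodule.mem_pi.2 fun x hx => ?_
    rw [Pi.single_apply, if_neg (by rintro rfl; exact hlt.not_ge hx)]
    exact Submodule.zero_mem _

/-! ### Tensor products -/

lemma sum_tensor {M : Type*} [AddCommMonoid M] (f : (C₁.tensor C₂).B → M) :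
    ∑ x, f x = ∑ a : C₁.B, ∑ b : C₂.B, f (a, b) :=
  Fintype.sum_prod_type f

def tmul (p : C₁.Chain) (q : C₂.Chain) : (C₁.tensor C₂).Chain := fun x => p x.1 * q x.2

lemma tmul_apply (p : C₁.Chain) (q : C₂.Chain) (x : (C₁.tensor C₂).B) :
    tmul p q x = p x.1 * q x.2 := rfl

lemma ne_zero_of_tmul_ne_zero {p : C₁.Chain} {q : C₂.Chain} {x : (C₁.tensor C₂).B}
    (h : tmul p q x ≠ 0) : p x.1 ≠ 0 ∧ q x.2 ≠ 0 :=
  ⟨left_ne_zero_of_mul h, right_ne_zero_of_mul h⟩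

lemma add_tmul (p p' : C₁.Chain) (q : C₂.Chain) : tmul (p + p') q = tmul p q + tmul p' q :=
  funext fun _ => add_mul _ _ _

lemma tmul_add (p : C₁.Chain) (q q' : C₂.Chain) : tmul p (q + q') = tmul p q + tmul p q' :=
  funext fun _ => mul_add _ _ _

@[simp] lemma tmul_zero (p : C₁.Chain) : tmul p (0 : C₂.Chain) = 0 := funext fun _ => mul_zero _

@[simp] lemma zero_tmul (q : C₂.Chain) : tmul (0 : C₁.Chain) q = 0 := funext fun _ => zero_mul _

lemma tmul_dotProduct_tmul (p ψ : C₁.Chain) (q φ : C₂.Chain) :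
    tmul p q ⬝ᵥ tmul ψ φ = (p ⬝ᵥ ψ) * (q ⬝ᵥ φ) := by
  rw [dotProduct, sum_tensor, dotProduct, dotProduct, Finset.sum_mul_sum]
  exact Finset.sum_congr rfl fun _ _ => Finset.sum_congr rfl fun _ _ => mul_mul_mul_comm _ _ _ _

lemma tensor_bdry_apply (c : (C₁.tensor C₂).Chain) (x : (C₁.tensor C₂).B) :
    (C₁.tensor C₂).bdry c x =
      C₁.bdry (fun a => c (a, x.2)) x.1 + C₂.bdry (fun b => c (x.1, b)) x.2 := by
  change ∑ y, c y * (C₁.tensor C₂).d y x = _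
  rw [sum_tensor]
  simp only [tensor, mul_add, mul_ite, mul_zero, Finset.sum_add_distrib]
  rw [Finset.sum_comm (f := fun a b => if b = x.2 then c (a, b) * C₁.d a x.1 else 0)]
  simp [bdry, Finset.sum_ite_eq']

lemma tensor_mulVec_apply (ψ : (C₁.tensor C₂).Chain) (x : (C₁.tensor C₂).B) :
    ((C₁.tensor C₂).dMat *ᵥ ψ) x =
      (C₁.dMat *ᵥ fun a => ψ (a, x.2)) x.1 + (C₂.dMat *ᵥ fun b => ψ (x.1, b)) x.2 := by
  change ∑ y, (C₁.tensor C₂).d x y * ψ y = _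
  rw [sum_tensor]
  simp only [tensor, add_mul, ite_mul, zero_mul, Finset.sum_add_distrib]
  rw [Finset.sum_comm (f := fun a b => if x.2 = b then C₁.d x.1 a * ψ (a, b) else 0)]
  simp [mulVec, dotProduct, dMat, Finset.sum_ite_eq]

lemma tensor_bdry_tmul (p : C₁.Chain) (q : C₂.Chain) :
    (C₁.tensor C₂).bdry (tmul p q) = tmul (C₁.bdry p) q + tmul p (C₂.bdry q) := by
  funext x
  rw [tensor_bdry_apply, Pi.add_apply]
  simp only [bdry, tmul, Finset.sum_mul, Finset.mul_sum]
  congr 1 <;> exact Finset.sum_congr rfl fun _ _ => by ring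

lemma tensor_mulVec_tmul (ψ : C₁.Chain) (φ : C₂.Chain) :
    (C₁.tensor C₂).dMat *ᵥ tmul ψ φ = tmul (C₁.dMat *ᵥ ψ) φ + tmul ψ (C₂.dMat *ᵥ φ) := by
  funext x
  rw [tensor_mulVec_apply, Pi.add_apply]
  simp only [mulVec, dotProduct, tmul, Finset.sum_mul, Finset.mul_sum]
  congr 1 <;> exact Finset.sum_congr rfl fun _ _ => by ring

lemma tensor_bdry_tmul_add_tmul {p p' w₁ : C₁.Chain} {q q' w₂ : C₂.Chain}
    (hw₁ : C₁.bdry w₁ = p + p') (hw₂ : C₂.bdry w₂ = q + q') (hq : C₂.isCycle q)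
    (hp' : C₁.isCycle p') :
    (C₁.tensor C₂).bdry (tmul w₁ q + tmul p' w₂) = tmul p q + tmul p' q' := by
  rw [bdry_add, tensor_bdry_tmul, tensor_bdry_tmul, hw₁, hw₂, hq, hp', tmul_zero, zero_tmul,
    add_zero, zero_add, add_tmul, tmul_add, add_assoc, ← add_assoc (tmul p' q),
    ZModModule.add_self, zero_add]

lemma fval_lev_tensor (u : ℝ) (x : (C₁.tensor C₂).B) :
    fval u ((C₁.tensor C₂).lev x) = fval u (C₁.lev x.1) + fval u (C₂.lev x.2) := by
  simp only [fval, lev, tensor]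
  push_cast
  ring

lemma inF_tmul {u s₁ s₂ : ℝ} {p : C₁.Chain} {q : C₂.Chain} (hp : C₁.inF u s₁ p)
    (hq : C₂.inF u s₂ q) : (C₁.tensor C₂).inF u (s₁ + s₂) (tmul p q) := fun x hx => by
  obtain ⟨h₁, h₂⟩ := ne_zero_of_tmul_ne_zero hx
  rw [fval_lev_tensor]
  exact add_le_add (hp _ h₁) (hq _ h₂)

/-- Künneth: tensoring the contraction of `C₁` onto `span z₀` with the identity of `C₂`
moves every cycle of `C₁ ⊗ C₂` into `z₀ ⊗ C₂`. -/
lemma IsModel.exists_eq_bdry_add_tmul (hC₁ : C₁.IsModel) {ψ z₀ : C₁.Chain}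
    (hψ : C₁.IsDualCocycle ψ) (hz₀ : C₁.GenCycle z₀) {z : (C₁.tensor C₂).Chain}
    (hz : (C₁.tensor C₂).isCycle z) :
    ∃ W c, C₂.isCycle c ∧ z = (C₁.tensor C₂).bdry W + tmul z₀ c := by
  obtain ⟨h, θ, hh, hθ⟩ := hC₁.exists_homotopy hψ hz₀
  set row : C₂.B → C₁.Chain := fun b a => z (a, b)
  have hrow : ∀ b, C₁.bdry (row b) = ∑ y, C₂.d y b • row y := fun b => by
    funext a
    have hab := congrFun hz (a, b)
    rw [tensor_bdry_apply z (a, b)] at hab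
    rw [CharTwo.add_eq_zero.1 hab]
    simp [bdry, Finset.sum_apply, row, mul_comm]
  refine ⟨fun x => h (row x.2) x.1, fun b => θ (row b), ?_, ?_⟩
  · funext b
    change ∑ y, θ (row y) * C₂.d y b = 0
    simp_rw [mul_comm (θ _), ← smul_eq_mul, ← map_smul, ← map_sum, ← hrow, hθ]
  · funext x
    have hhab := congrFun (hh (row x.2)) x.1
    rw [hrow, map_sum] at hhab
    simp only [Pi.add_apply, Finset.sum_apply, map_smul, Pi.smul_apply, smul_eq_mul] at hhab
    rw [Pi.add_apply, tensor_bdry_apply, tmul_apply]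
    simp only [bdry, mul_comm _ (C₂.d _ _)] at hhab ⊢
    rw [hhab, add_assoc, mul_comm, ZModModule.add_self, add_zero]
    rfl

lemma mulVec_tmul_eq_zero {ψ₁ : C₁.Chain} {ψ₂ : C₂.Chain} (h₁ : C₁.dMat *ᵥ ψ₁ = 0)
    (h₂ : C₂.dMat *ᵥ ψ₂ = 0) : (C₁.tensor C₂).dMat *ᵥ tmul ψ₁ ψ₂ = 0 := by
  rw [tensor_mulVec_tmul, h₁, h₂, zero_tmul, tmul_zero, add_zero]

lemma genCycle_tmul (hC₁ : C₁.IsModel) (hC₂ : C₂.IsModel) {z₁ : C₁.Chain} {z₂ : C₂.Chain}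
    (h₁ : C₁.GenCycle z₁) (h₂ : C₂.GenCycle z₂) : (C₁.tensor C₂).GenCycle (tmul z₁ z₂) := by
  obtain ⟨ψ₁, hψ₁, -⟩ := hC₁.exists_isDualCocycle 0
  obtain ⟨ψ₂, hψ₂, -⟩ := hC₂.exists_isDualCocycle 0
  refine ⟨?_, fun x hx => ?_, fun ⟨w, hw⟩ => ?_⟩
  · rw [isCycle, tensor_bdry_tmul, h₁.1, h₂.1, zero_tmul, tmul_zero, add_zero]
  · obtain ⟨hx₁, hx₂⟩ := ne_zero_of_tmul_ne_zero hx
    change C₁.gr x.1 + C₂.gr x.2 = 0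
    rw [h₁.2.1 _ hx₁, h₂.2.1 _ hx₂, add_zero]
  · have h0 := bdry_dotProduct w (tmul ψ₁ ψ₂)
    rw [mulVec_tmul_eq_zero hψ₁.1 hψ₂.1, dotProduct_zero, hw, tmul_dotProduct_tmul,
      hψ₁.2 z₁ h₁, hψ₂.2 z₂ h₂, one_mul] at h0
    exact one_ne_zero h0

lemma isDualCocycle_tmul (hC₁ : C₁.IsModel) (hC₂ : C₂.IsModel) {ψ₁ : C₁.Chain}
    {ψ₂ : C₂.Chain} (hψ₁ : C₁.IsDualCocycle ψ₁) (hψ₂ : C₂.IsDualCocycle ψ₂) :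
    (C₁.tensor C₂).IsDualCocycle (tmul ψ₁ ψ₂) := by
  refine ⟨mulVec_tmul_eq_zero hψ₁.1 hψ₂.1, fun z hz => ?_⟩
  obtain ⟨z₁, hz₁⟩ := hC₁.exists_genCycle
  obtain ⟨z₂, hz₂⟩ := hC₂.exists_genCycle
  obtain ⟨W, c, hc, rfl⟩ := hC₁.exists_eq_bdry_add_tmul hψ₁ hz₁ hz.1
  have hdot : ((C₁.tensor C₂).bdry W + tmul z₁ c) ⬝ᵥ tmul ψ₁ ψ₂ = c ⬝ᵥ ψ₂ := by
    rw [add_dotProduct, bdry_dotProduct, mulVec_tmul_eq_zero hψ₁.1 hψ₂.1, dotProduct_zero,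
      zero_add, tmul_dotProduct_tmul, hψ₁.2 z₁ hz₁, one_mul]
  rw [hdot]
  refine ZMod.eq_one_of_ne_zero_two fun hc0 => hz.2.2 ?_
  obtain ⟨v, hv⟩ := hC₂.isBoundary_add_dotProduct_smul hψ₂ hz₂ hc
  rw [hc0, zero_smul, add_zero] at hv
  refine ⟨W + tmul z₁ v, ?_⟩
  rw [bdry_add, tensor_bdry_tmul, hz₁.1, zero_tmul, zero_add, hv]

lemma IsModel.gamma_tensor (hC₁ : C₁.IsModel) (hC₂ : C₂.IsModel) (u : ℝ) :
    (C₁.tensor C₂).gamma u = C₁.gamma u + C₂.gamma u := by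
  obtain ⟨z₁, hz₁, hz₁u⟩ := exists_genCycle_inF_gamma hC₁.exists_genCycle u
  obtain ⟨z₂, hz₂, hz₂u⟩ := exists_genCycle_inF_gamma hC₂.exists_genCycle u
  refine le_antisymm (gamma_le (genCycle_tmul hC₁ hC₂ hz₁ hz₂) (inF_tmul hz₁u hz₂u)) ?_
  obtain ⟨ψ₁, hψ₁, hψ₁u⟩ := hC₁.exists_isDualCocycle u
  obtain ⟨ψ₂, hψ₂, hψ₂u⟩ := hC₂.exists_isDualCocycle u
  obtain ⟨z, hz, hzu⟩ := exists_genCycle_inF_gamma ⟨_, genCycle_tmul hC₁ hC₂ hz₁ hz₂⟩ u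
  have hdot : z ⬝ᵥ tmul ψ₁ ψ₂ ≠ 0 := by
    rw [(isDualCocycle_tmul hC₁ hC₂ hψ₁ hψ₂).2 z hz]
    exact one_ne_zero
  obtain ⟨x, -, hx⟩ := Finset.exists_ne_zero_of_sum_ne_zero hdot
  obtain ⟨hx₁, hx₂⟩ := ne_zero_of_tmul_ne_zero (right_ne_zero_of_mul hx)
  calc C₁.gamma u + C₂.gamma u ≤ fval u (C₁.lev x.1) + fval u (C₂.lev x.2) :=
        add_le_add (hψ₁u _ hx₁) (hψ₂u _ hx₂)
    _ = fval u ((C₁.tensor C₂).lev x) := (fval_lev_tensor u x).symm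
    _ ≤ (C₁.tensor C₂).gamma u := hzu x (left_ne_zero_of_mul hx)

/-! ### The cycles `Z^±` and `γ²` -/

lemma mem_Zminus_iff {t : ℝ} {z : C.Chain} :
    z ∈ C.Zminus t ↔ ∀ᶠ u in 𝓝[<] t, C.GenCycle z ∧ C.inF u (C.gamma u) z := by
  constructor
  · rintro ⟨δ₀, hδ₀, h⟩
    filter_upwards [Ioo_mem_nhdsLT (sub_lt_self t hδ₀)] with u hu
    simpa [ZminusAt] using h (t - u) (by linarith [hu.2]) (by linarith [hu.1])
  · intro h
    obtain ⟨l, hl, hsub⟩ := mem_nhdsLT_iff_exists_Ioo_subset.1 h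
    exact ⟨t - l, sub_pos.2 hl, fun δ h₀ h₁ => hsub ⟨by linarith, by linarith⟩⟩

lemma mem_Zplus_iff {t : ℝ} {z : C.Chain} :
    z ∈ C.Zplus t ↔ ∀ᶠ u in 𝓝[>] t, C.GenCycle z ∧ C.inF u (C.gamma u) z := by
  constructor
  · rintro ⟨δ₀, hδ₀, h⟩
    filter_upwards [Ioo_mem_nhdsGT (lt_add_of_pos_right t hδ₀)] with u hu
    simpa [ZplusAt] using h (u - t) (by linarith [hu.1]) (by linarith [hu.2])
  · intro h
    obtain ⟨r, hr, hsub⟩ := mem_nhdsGT_iff_exists_Ioo_subset.1 h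
    exact ⟨r - t, sub_pos.2 hr, fun δ h₀ h₁ => hsub ⟨by linarith, by linarith⟩⟩

lemma continuous_fval (p : ℤ × ℤ) : Continuous fun u => fval u p := by
  unfold fval
  fun_prop

/-- `F_{u,γ_C(u)}` varies continuously with `u`, so a cycle lying in it for `u` near `t`
lies in it at `t`. -/
lemma genCycle_inF_of_eventually (hex : ∃ z, C.GenCycle z) {l : Filter ℝ} [l.NeBot] {t : ℝ}
    (hl : l ≤ 𝓝 t) {z : C.Chain} (h : ∀ᶠ u in l, C.GenCycle z ∧ C.inF u (C.gamma u) z) :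
    C.GenCycle z ∧ C.inF t (C.gamma t) z :=
  ⟨h.exists.elim fun _ hu => hu.1, fun x hx => le_of_tendsto_of_tendsto
    (((continuous_fval _).tendsto t).mono_left hl) (((continuous_gamma hex).tendsto t).mono_left hl)
    (h.mono fun _ hu => hu.2 x hx)⟩

lemma IsModel.genCycle_inF_of_mem_Zminus (hM : C.IsModel) {t : ℝ} {z : C.Chain}
    (hz : z ∈ C.Zminus t) : C.GenCycle z ∧ C.inF t (C.gamma t) z :=
  genCycle_inF_of_eventually hM.exists_genCycle nhdsWithin_le_nhds (mem_Zminus_iff.1 hz)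

lemma IsModel.genCycle_inF_of_mem_Zplus (hM : C.IsModel) {t : ℝ} {z : C.Chain}
    (hz : z ∈ C.Zplus t) : C.GenCycle z ∧ C.inF t (C.gamma t) z :=
  genCycle_inF_of_eventually hM.exists_genCycle nhdsWithin_le_nhds (mem_Zplus_iff.1 hz)

lemma eventually_genCycle_inF_tmul (hC₁ : C₁.IsModel) (hC₂ : C₂.IsModel) {l : Filter ℝ}
    {z₁ : C₁.Chain} {z₂ : C₂.Chain}
    (h₁ : ∀ᶠ u in l, C₁.GenCycle z₁ ∧ C₁.inF u (C₁.gamma u) z₁)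
    (h₂ : ∀ᶠ u in l, C₂.GenCycle z₂ ∧ C₂.inF u (C₂.gamma u) z₂) :
    ∀ᶠ u in l, (C₁.tensor C₂).GenCycle (tmul z₁ z₂) ∧
      (C₁.tensor C₂).inF u ((C₁.tensor C₂).gamma u) (tmul z₁ z₂) :=
  (h₁.and h₂).mono fun u ⟨⟨hg₁, hf₁⟩, hg₂, hf₂⟩ =>
    ⟨genCycle_tmul hC₁ hC₂ hg₁ hg₂, by rw [hC₁.gamma_tensor hC₂]; exact inF_tmul hf₁ hf₂⟩

lemma tmul_mem_Zminus (hC₁ : C₁.IsModel) (hC₂ : C₂.IsModel) {t : ℝ} {z₁ : C₁.Chain}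
    {z₂ : C₂.Chain} (h₁ : z₁ ∈ C₁.Zminus t) (h₂ : z₂ ∈ C₂.Zminus t) :
    tmul z₁ z₂ ∈ (C₁.tensor C₂).Zminus t :=
  mem_Zminus_iff.2 <|
    eventually_genCycle_inF_tmul hC₁ hC₂ (mem_Zminus_iff.1 h₁) (mem_Zminus_iff.1 h₂)

lemma tmul_mem_Zplus (hC₁ : C₁.IsModel) (hC₂ : C₂.IsModel) {t : ℝ} {z₁ : C₁.Chain}
    {z₂ : C₂.Chain} (h₁ : z₁ ∈ C₁.Zplus t) (h₂ : z₂ ∈ C₂.Zplus t) :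
    tmul z₁ z₂ ∈ (C₁.tensor C₂).Zplus t :=
  mem_Zplus_iff.2 <|
    eventually_genCycle_inF_tmul hC₁ hC₂ (mem_Zplus_iff.1 h₁) (mem_Zplus_iff.1 h₂)

lemma sameClass_self_iff {t r : ℝ} {z z' : C.Chain} :
    C.sameClass t t r z z' ↔ C.inF t (max (C.gamma t) r) z ∧ C.inF t (max (C.gamma t) r) z' ∧
      ∃ w, C.inF t (max (C.gamma t) r) w ∧ C.bdry w = z + z' := by
  simp only [sameClass, inRegion, inF, le_max_iff]

lemma IsModel.max_mem_gamma2Set_tensor (hC₁ : C₁.IsModel) (hC₂ : C₂.IsModel) {t ρ₁ ρ₂ : ℝ}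
    (h₁ : ρ₁ ∈ C₁.gamma2Set t t) (h₂ : ρ₂ ∈ C₂.gamma2Set t t) :
    max (ρ₁ + C₂.gamma t) (C₁.gamma t + ρ₂) ∈ (C₁.tensor C₂).gamma2Set t t := by
  obtain ⟨zm₁, hzm₁, zp₁, hzp₁, h₁⟩ := h₁
  obtain ⟨zm₂, hzm₂, zp₂, hzp₂, h₂⟩ := h₂
  obtain ⟨-, -, w₁, hw₁, hbw₁⟩ := sameClass_self_iff.1 h₁
  obtain ⟨-, -, w₂, hw₂, hbw₂⟩ := sameClass_self_iff.1 h₂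
  obtain ⟨-, hm₁⟩ := hC₁.genCycle_inF_of_mem_Zminus hzm₁
  obtain ⟨hzm₂', hm₂⟩ := hC₂.genCycle_inF_of_mem_Zminus hzm₂
  obtain ⟨hzp₁', hp₁⟩ := hC₁.genCycle_inF_of_mem_Zplus hzp₁
  obtain ⟨-, hp₂⟩ := hC₂.genCycle_inF_of_mem_Zplus hzp₂
  refine ⟨tmul zm₁ zm₂, tmul_mem_Zminus hC₁ hC₂ hzm₁ hzm₂, tmul zp₁ zp₂,
    tmul_mem_Zplus hC₁ hC₂ hzp₁ hzp₂, sameClass_self_iff.2 ?_⟩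
  rw [hC₁.gamma_tensor hC₂]
  refine ⟨inF_mono (inF_tmul hm₁ hm₂) (le_max_left _ _),
    inF_mono (inF_tmul hp₁ hp₂) (le_max_left _ _), tmul w₁ zm₂ + tmul zp₁ w₂,
    inF_add (inF_mono (inF_tmul hw₁ hm₂) ?_) (inF_mono (inF_tmul hp₁ hw₂) ?_),
    tensor_bdry_tmul_add_tmul hbw₁ hbw₂ hzm₂'.1 hzp₁'.1⟩
  · rw [← max_add_add_right]
    exact max_le_max le_rfl (le_max_left _ _)
  · rw [← max_add_add_left]
    exact max_le_max le_rfl (le_max_right _ _)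

lemma IsModel.gamma2_sub_gamma_tensor_le (hC₁ : C₁.IsModel) (hC₂ : C₂.IsModel) (t : ℝ) :
    (C₁.tensor C₂).gamma2 t t - ((C₁.tensor C₂).gamma t : EReal) ≤
      max (C₁.gamma2 t t - (C₁.gamma t : EReal)) (C₂.gamma2 t t - (C₂.gamma t : EReal)) := by
  simp only [gamma2, EReal.sInf_image_coe_sub]
  refine sInf_le_max_sInf ?_
  rintro _ ⟨ρ₁, hρ₁, rfl⟩ _ ⟨ρ₂, hρ₂, rfl⟩
  refine ⟨_, hC₁.max_mem_gamma2Set_tensor hC₂ hρ₁ hρ₂, ?_⟩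
  dsimp only
  rw [hC₁.gamma_tensor hC₂, ← EReal.coe_strictMono.monotone.map_max, ← max_sub_sub_right]
  congr 2 <;> ring

end PreComplex

theorem upsilon2_subadditive_general (C₁ C₂ : PreComplex)
    (hC₁ : C₁.IsModel) (hC₂ : C₂.IsModel)
    (t : ℝ) :
    min (C₁.Upsilon2 t t) (C₂.Upsilon2 t t) ≤ (C₁.tensor C₂).Upsilon2 t t := by
  simpa only [PreComplex.Upsilon2, EReal.antitone_neg_two_mul.map_max] using
    EReal.antitone_neg_two_mul (hC₁.gamma2_sub_gamma_tensor_le hC₂ t)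

/-- subadditivity of `Υ²` under tensor product:
`Υ²_{C₁⊗C₂,t}(t) ≥ min{Υ²_{C₁,t}(t), Υ²_{C₂,t}(t)}`. -/
theorem upsilon2_subadditive (C₁ C₂ : PreComplex)
    (hC₁ : C₁.IsModel) (hC₂ : C₂.IsModel)
    (t : ℝ) (ht : t ∈ Set.Ioo (0 : ℝ) 2) :
    min (C₁.Upsilon2 t t) (C₂.Upsilon2 t t) ≤ (C₁.tensor C₂).Upsilon2 t t :=
  upsilon2_subadditive_general C₁ C₂ hC₁ hC₂ t
end

section
/- Let C be a model knot complex and let g ≥ 1 be an integer such that |alg(x) − Alex(x)| ≤ g for every basis element x. Fix t ∈ (0,2). Then, on the set where it is finite, the piecewise linear function s ↦ Υ²_{C,t}(s) satisfies: at every s ∈ (0,2) where it is differentiable, its derivative has absolute value at most g; and every s₀ ∈ (0,2) at which its derivative jumps is a rational number which, written in lowest terms as s₀ = p/q, satisfies q ≤ g if p is odd, and q/2 ≤ g if p is even. -/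
open scoped BigOperators

/-!
The set of admissible `r` in the definition of `γ²_{C,t}(s)` depends on `s` only through
the values `f_s(x)` of finitely many finite sets `Y` of basis elements (those supporting some
`z⁻`, `z⁺` and a homology `w` between them, outside `F_{t,γ_C(t)}`): `r` is admissible iff
`f_s ≤ r` on one of the `Y`. So `γ²_{C,t}` is a min-max of the lines `s ↦ f_s(x)`, whose slopes
are `(Alex(x) − alg(x))/2`. On an interval containing no crossing of two lines of different
slopes the order of the lines is constant, so the min-max is a single line there. Hence `Υ²_{C,t}`
has slopes `alg(x) − Alex(x) ∈ [−g, g]`, and it can only fail to be differentiable at a crossing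
`s = 2a/b` with `a, b ∈ ℤ`, `0 < |b| ≤ 2g`.
-/

open Set Filter Topology

theorem le_of_le_of_isPreconnected {I : Set ℝ} (hI : IsPreconnected I) {f g : ℝ → ℝ}
    (hf : ContinuousOn f I) (hg : ContinuousOn g I)
    (hfg : ∀ s ∈ I, f s = g s → EqOn f g I) {a s : ℝ} (ha : a ∈ I) (hs : s ∈ I)
    (hle : f a ≤ g a) : f s ≤ g s := by
  by_contra! hlt
  obtain ⟨r, hr, hfgr⟩ := hI.intermediate_value₂ ha hs hf hg hle hlt.le
  exact hlt.ne' (hfg r hr hfgr hs)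

theorem exists_forall_minmax_eq_Ici {ι β α : Type*} [LinearOrder α] (𝒜 : Finset (Finset ι))
    (h𝒜 : 𝒜.Nonempty) (h𝒜Y : ∀ Y ∈ 𝒜, Y.Nonempty) (f : ι → β → α) {S : Set β} (a : β)
    (hf : ∀ i j, f i a ≤ f j a → ∀ s ∈ S, f i s ≤ f j s) :
    ∃ i₀, ∀ s ∈ S, {r | ∃ Y ∈ 𝒜, ∀ x ∈ Y, f x s ≤ r} = Ici (f i₀ s) := by
  obtain ⟨i, -⟩ := h𝒜Y _ h𝒜.choose_spec
  have : Nonempty ι := ⟨i⟩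
  have hmax : ∀ Y ∈ 𝒜, ∃ x ∈ Y, ∀ y ∈ Y, f y a ≤ f x a := fun Y hY =>
    Finset.exists_max_image Y (f · a) (h𝒜Y Y hY)
  choose! top htop_mem htop_max using hmax
  obtain ⟨Y₀, hY₀, hY₀_min⟩ := Finset.exists_min_image 𝒜 (fun Y => f (top Y) a) h𝒜
  refine ⟨top Y₀, fun s hs => Set.ext fun r => ⟨?_, fun hr => ?_⟩⟩
  · rintro ⟨Y, hY, hYr⟩
    exact (hf _ _ (hY₀_min Y hY) s hs).trans (hYr _ (htop_mem Y hY))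
  · exact ⟨Y₀, hY₀, fun x hx => (hf _ _ (htop_max Y₀ hY₀ x hx) s hs).trans hr⟩

theorem nonempty_of_sInf_minmax_eq_coe {ι : Type*} {𝒜 : Finset (Finset ι)} {φ : ι → ℝ}
    {c : ℝ}
    (h : sInf (((↑) : ℝ → EReal) '' {r | ∃ Y ∈ 𝒜, ∀ x ∈ Y, φ x ≤ r}) = c) :
    𝒜.Nonempty ∧ ∀ Y ∈ 𝒜, Y.Nonempty := by
  refine ⟨?_, fun Y hY => ?_⟩
  · by_contra h𝒜
    simp [Finset.not_nonempty_iff_eq_empty.mp h𝒜] at h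
  · by_contra hY'
    rw [Finset.not_nonempty_iff_eq_empty] at hY'
    have : (c : EReal) ≤ (c - 1 : ℝ) := h ▸ sInf_le ⟨c - 1, ⟨Y, hY, by simp [hY']⟩, rfl⟩
    linarith [EReal.coe_le_coe_iff.mp this]

theorem EReal.sInf_image_coe_Ici (c : ℝ) : sInf (((↑) : ℝ → EReal) '' Ici c) = c :=
  le_antisymm (sInf_le ⟨c, self_mem_Ici, rfl⟩)
    (le_sInf <| by rintro _ ⟨r, hr, rfl⟩; exact EReal.coe_le_coe_iff.mpr hr)

theorem Set.Finite.exists_Ioo_disjoint_diff {E : Set ℝ} (hE : E.Finite) (s : ℝ) :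
    ∃ ε > 0, Disjoint (Ioo (s - ε) (s + ε)) (E \ {s}) := by
  obtain ⟨ε, hε, hball⟩ := Metric.mem_nhds_iff.mp
    ((hE.sdiff (t := {s})).isClosed.compl_mem_nhds fun h => h.2 rfl)
  exact ⟨ε, hε, by rwa [← Real.ball_eq_Ioo, ← Set.subset_compl_iff_disjoint_right]⟩

theorem deriv_eq_of_eqOn_Ioo {F : ℝ → ℝ} {s b c m : ℝ} (hF : DifferentiableAt ℝ F s)
    (hsb : s < b) (hFl : ∀ r ∈ Ioo s b, F r = c + r * m) : deriv F s = m := by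
  have hl : HasDerivAt (fun r => c + r * m) m s := by
    simpa using ((hasDerivAt_id s).mul_const m).const_add c
  have hev : F =ᶠ[𝓝[>] s] fun r => c + r * m :=
    eventuallyEq_of_mem (Ioo_mem_nhdsGT hsb) hFl
  have hFs : F s = c + s * m :=
    tendsto_nhds_unique (hF.continuousAt.tendsto.mono_left nhdsWithin_le_nhds)
      ((hl.continuousAt.tendsto.mono_left nhdsWithin_le_nhds).congr' hev.symm)
  exact (uniqueDiffWithinAt_Ioi s).eq_deriv _ hF.hasDerivAt.hasDerivWithinAt
    (hl.hasDerivWithinAt.congr_of_eventuallyEq hev hFs)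

theorem differentiableAt_of_eqOn_Ioo {F : ℝ → ℝ} {s a b c m : ℝ} (hs : s ∈ Ioo a b)
    (hFl : ∀ r ∈ Ioo a b, F r = c + r * m) : DifferentiableAt ℝ F s :=
  ((differentiableAt_id.mul_const m).const_add c).congr_of_eventuallyEq
    (eventuallyEq_of_mem (Ioo_mem_nhds hs.1 hs.2) hFl)

theorem exists_coprime_div_eq_two_mul_div (a b : ℤ) (hb : b ≠ 0) :
    ∃ p q : ℤ, 0 < q ∧ Int.gcd p q = 1 ∧ 2 * (a : ℝ) / b = p / q ∧ q ∣ b ∧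
      (Odd p → 2 * q ∣ b) := by
  set r : ℚ := Rat.divInt (2 * a) b
  obtain ⟨c, hnum, hden⟩ := Rat.num_den_mk hb rfl (q := r)
  have hc : c ≠ 0 := by rintro rfl; simp at hden; exact hb hden
  refine ⟨r.num, r.den, by exact_mod_cast r.den_pos, r.reduced, ?_,
    ⟨c, by rw [hden, mul_comm]⟩, fun hodd => ?_⟩
  · rw [show 2 * (a : ℝ) = ((2 * a : ℤ) : ℝ) by push_cast; ring, hnum, hden]
    push_cast
    exact mul_div_mul_left _ _ (by exact_mod_cast hc)
  · have : Even (c * r.num) := hnum ▸ even_two_mul a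
    obtain ⟨k, rfl⟩ := (Int.even_mul.mp this).resolve_right (Int.not_even_iff_odd.mpr hodd)
    exact ⟨k, by rw [hden]; ring⟩

theorem fval_eq (s : ℝ) (p : ℤ × ℤ) : fval s p = p.1 + s * ((p.2 - p.1) / 2) := by
  unfold fval; ring

theorem continuous_fval (p : ℤ × ℤ) : Continuous fun s => fval s p := by
  unfold fval; fun_prop

theorem eq_two_mul_div_of_fval_eq {s : ℝ} {p q : ℤ × ℤ} (hpq : p.2 - p.1 ≠ q.2 - q.1)
    (h : fval s p = fval s q) :
    s = 2 * ((q.1 - p.1 : ℤ) : ℝ) / ((p.2 - p.1 - (q.2 - q.1) : ℤ) : ℝ) := by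
  have hne : ((p.2 - p.1 - (q.2 - q.1) : ℤ) : ℝ) ≠ 0 := by exact_mod_cast sub_ne_zero.mpr hpq
  rw [eq_div_iff hne]
  rw [fval_eq, fval_eq] at h
  push_cast
  linarith

theorem fval_eq_fval_of_sub_eq {s : ℝ} {p q : ℤ × ℤ} (hpq : p.2 - p.1 = q.2 - q.1)
    (h : fval s p = fval s q) (r : ℝ) : fval r p = fval r q := by
  have hpq' : (p.2 - p.1 : ℝ) = q.2 - q.1 := by exact_mod_cast hpq
  rw [fval_eq, fval_eq, hpq'] at h ⊢
  linarith

namespace PreComplex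

variable (C : PreComplex)

def crossings : Set ℝ :=
  {s | ∃ x y, C.alex x - C.alg x ≠ C.alex y - C.alg y ∧ fval s (C.lev x) = fval s (C.lev y)}

theorem crossings_finite : C.crossings.Finite :=
  (Set.finite_range fun xy : C.B × C.B => 2 * ((C.alg xy.2 - C.alg xy.1 : ℤ) : ℝ) /
      ((C.alex xy.1 - C.alg xy.1 - (C.alex xy.2 - C.alg xy.2) : ℤ) : ℝ)).subset
    fun _ ⟨x, y, hxy, h⟩ => ⟨(x, y), (eq_two_mul_div_of_fval_eq hxy h).symm⟩

theorem exists_coprime_of_mem_crossings {g : ℤ} (hgenus : ∀ x, |C.alg x - C.alex x| ≤ g)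
    {s : ℝ} (hs : s ∈ C.crossings) :
    ∃ p q : ℤ, 0 < q ∧ Int.gcd p q = 1 ∧ s = p / q ∧
      (Odd p → q ≤ g) ∧ (Even p → q ≤ 2 * g) := by
  obtain ⟨x, y, hxy, h⟩ := hs
  set b := C.alex x - C.alg x - (C.alex y - C.alg y)
  have hb : b ≠ 0 := sub_ne_zero.mpr hxy
  have hb2g : |b| ≤ 2 * g := by
    have hx := abs_le.mp (hgenus x)
    have hy := abs_le.mp (hgenus y)
    exact abs_le.mpr ⟨by omega, by omega⟩
  obtain ⟨p, q, hq, hpq, hsq, hqb, hodd⟩ := exists_coprime_div_eq_two_mul_div _ _ hb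
  have hle : ∀ {n}, n ∣ b → n ≤ |b| := fun hn =>
    Int.le_of_dvd (abs_pos.mpr hb) ((dvd_abs _ _).mpr hn)
  exact ⟨p, q, hq, hpq, (eq_two_mul_div_of_fval_eq hxy h).trans hsq,
    fun hp => by linarith [hle (hodd hp)], fun _ => (hle hqb).trans hb2g⟩

variable {C}

theorem fval_le_fval_of_isPreconnected {I : Set ℝ} (hI : IsPreconnected I)
    (hI' : Disjoint I C.crossings) {a s : ℝ} (ha : a ∈ I) (hs : s ∈ I) {x y : C.B}
    (h : fval a (C.lev x) ≤ fval a (C.lev y)) : fval s (C.lev x) ≤ fval s (C.lev y) := by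
  refine le_of_le_of_isPreconnected hI (continuous_fval _).continuousOn
    (continuous_fval _).continuousOn (fun r hr hxy _ _ => ?_) ha hs h
  by_cases hslope : C.alex x - C.alg x = C.alex y - C.alg y
  · exact fval_eq_fval_of_sub_eq hslope hxy _
  · exact absurd ⟨x, y, hslope, hxy⟩ (hI'.notMem_of_mem_left hr)

theorem exists_finset_gamma2Set_eq (t : ℝ) : ∃ 𝒜 : Finset (Finset C.B), ∀ s r,
    r ∈ C.gamma2Set t s ↔ ∃ Y ∈ 𝒜, ∀ x ∈ Y, fval s (C.lev x) ≤ r := by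
  classical
  let outer (T : C.Chain × C.Chain × C.Chain) : Finset C.B :=
    {x | (T.1 x ≠ 0 ∨ T.2.1 x ≠ 0 ∨ T.2.2 x ≠ 0) ∧ C.gamma t < fval t (C.lev x)}
  let admissible : Finset (C.Chain × C.Chain × C.Chain) :=
    {T | T.1 ∈ C.Zminus t ∧ T.2.1 ∈ C.Zplus t ∧ C.bdry T.2.2 = T.1 + T.2.1}
  refine ⟨admissible.image outer, fun s r => ⟨?_, ?_⟩⟩
  · rintro ⟨zm, hzm, zp, hzp, hm, hp, w, hw, hbd⟩
    refine ⟨outer (zm, zp, w), Finset.mem_image_of_mem _ (by simp [admissible, *]), ?_⟩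
    intro x hx
    simp only [outer, Finset.mem_filter, Finset.mem_univ, true_and] at hx
    obtain ⟨hsupp | hsupp | hsupp, hout⟩ := hx
    · exact (hm x hsupp).resolve_left hout.not_ge
    · exact (hp x hsupp).resolve_left hout.not_ge
    · exact (hw x hsupp).resolve_left hout.not_ge
  · rintro ⟨_, hY, hYr⟩
    obtain ⟨⟨zm, zp, w⟩, hT, rfl⟩ := Finset.mem_image.mp hY
    simp only [admissible, Finset.mem_filter, Finset.mem_univ, true_and] at hT
    have hreg : ∀ x, (zm x ≠ 0 ∨ zp x ≠ 0 ∨ w x ≠ 0) → C.inRegion t s r x := fun x hx =>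
      (le_or_gt _ _).imp_right fun hout => hYr x (by simp [outer, hx, hout])
    exact ⟨zm, hT.1, zp, hT.2.1, fun x h => hreg x (.inl h),
      fun x h => hreg x (.inr (.inl h)), w, fun x h => hreg x (.inr (.inr h)), hT.2.2⟩

theorem gamma2_eq_coe_of_upsilon2_eq_coe {t s v : ℝ} (hv : C.Upsilon2 t s = v) :
    C.gamma2 t s = (C.gamma2 t s).toReal := by
  refine (EReal.coe_toReal ?_ ?_).symm <;> intro h <;>
    simp [Upsilon2, h, EReal.mul_top_of_pos, EReal.mul_bot_of_pos] at hv

theorem exists_upsilon2_eq_affine {t s₁ v : ℝ} (hv : C.Upsilon2 t s₁ = v) {I : Set ℝ}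
    (hI : IsPreconnected I) (hI' : Disjoint I C.crossings) {a : ℝ} (ha : a ∈ I) :
    ∃ x : C.B, ∀ s ∈ I,
      (C.Upsilon2 t s).toReal = 2 * (C.gamma t - C.alg x) + s * (C.alg x - C.alex x) := by
  obtain ⟨𝒜, h𝒜⟩ := C.exists_finset_gamma2Set_eq t
  have hset (s : ℝ) : C.gamma2Set t s = {r | ∃ Y ∈ 𝒜, ∀ x ∈ Y, fval s (C.lev x) ≤ r} :=
    Set.ext (h𝒜 s)
  have hfin := gamma2_eq_coe_of_upsilon2_eq_coe hv
  rw [gamma2, hset] at hfin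
  obtain ⟨h𝒜ne, hYne⟩ := nonempty_of_sInf_minmax_eq_coe hfin
  obtain ⟨x, hx⟩ :=
    exists_forall_minmax_eq_Ici 𝒜 h𝒜ne hYne (fun x s => fval s (C.lev x)) a
      fun _ _ h s hs => fval_le_fval_of_isPreconnected hI hI' ha hs h
  refine ⟨x, fun s hs => ?_⟩
  rw [Upsilon2, gamma2, hset, hx s hs, EReal.sInf_image_coe_Ici, ← EReal.coe_sub,
    show (-2 : EReal) = (-2 : ℝ) from rfl, ← EReal.coe_mul, EReal.toReal_coe, fval_eq]
  simp only [lev]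
  ring

end PreComplex

theorem upsilon2_genus_bound_general (C : PreComplex)
    (g : ℤ) (hgenus : ∀ x, |C.alg x - C.alex x| ≤ g)
    (t : ℝ) :
    (∀ s ∈ Set.Ioo (0 : ℝ) 2, (∃ v : ℝ, C.Upsilon2 t s = (v : EReal)) →
      DifferentiableAt ℝ (fun s' => (C.Upsilon2 t s').toReal) s →
      |deriv (fun s' => (C.Upsilon2 t s').toReal) s| ≤ (g : ℝ)) ∧
    (∀ s₀ ∈ Set.Ioo (0 : ℝ) 2, (∃ v : ℝ, C.Upsilon2 t s₀ = (v : EReal)) →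
      ¬ DifferentiableAt ℝ (fun s' => (C.Upsilon2 t s').toReal) s₀ →
      ∃ p q : ℤ, 0 < q ∧ Int.gcd p q = 1 ∧ s₀ = (p : ℝ) / (q : ℝ) ∧
        (Odd p → q ≤ g) ∧ (Even p → q ≤ 2 * g)) := by
  refine ⟨fun s _ ⟨v, hv⟩ hdiff => ?_, fun s₀ _ ⟨v, hv⟩ hnd => ?_⟩
  · obtain ⟨ε, hε, hgap⟩ := C.crossings_finite.exists_Ioo_disjoint_diff s
    have hright : Disjoint (Ioo s (s + ε)) C.crossings :=
      Set.disjoint_left.mpr fun r hr hrE =>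
        Set.disjoint_left.mp hgap ⟨by linarith [hr.1], hr.2⟩ ⟨hrE, hr.1.ne'⟩
    obtain ⟨x, hx⟩ := C.exists_upsilon2_eq_affine hv isPreconnected_Ioo hright
      (a := s + ε / 2) ⟨by linarith, by linarith⟩
    rw [deriv_eq_of_eqOn_Ioo hdiff (by linarith) hx]
    exact_mod_cast hgenus x
  · refine C.exists_coprime_of_mem_crossings hgenus (by_contra fun hs₀ => hnd ?_)
    obtain ⟨ε, hε, hgap⟩ := C.crossings_finite.exists_Ioo_disjoint_diff s₀
    rw [sdiff_singleton_eq_self hs₀] at hgap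
    obtain ⟨x, hx⟩ := C.exists_upsilon2_eq_affine hv isPreconnected_Ioo hgap
      (a := s₀) ⟨by linarith, by linarith⟩
    exact differentiableAt_of_eqOn_Ioo ⟨by linarith, by linarith⟩ hx

/-- if `|alg(x) − Alex(x)| ≤ g` for all basis elements `x`, then
on the set where `Υ²_{C,t}` is finite: wherever differentiable its derivative
is at most `g` in absolute value, and any point of `(0,2)` where the
derivative jumps is rational `p/q` (lowest terms) with `q ≤ g` for `p` odd and
`q/2 ≤ g` for `p` even. -/
theorem upsilon2_genus_bound (C : PreComplex) (hC : C.IsModel)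
    (g : ℤ) (hg : 1 ≤ g) (hgenus : ∀ x, |C.alg x - C.alex x| ≤ g)
    (t : ℝ) (ht : t ∈ Set.Ioo (0 : ℝ) 2) :
    (∀ s ∈ Set.Ioo (0 : ℝ) 2, (∃ v : ℝ, C.Upsilon2 t s = (v : EReal)) →
      DifferentiableAt ℝ (fun s' => (C.Upsilon2 t s').toReal) s →
      |deriv (fun s' => (C.Upsilon2 t s').toReal) s| ≤ (g : ℝ)) ∧
    (∀ s₀ ∈ Set.Ioo (0 : ℝ) 2, (∃ v : ℝ, C.Upsilon2 t s₀ = (v : EReal)) →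
      ¬ DifferentiableAt ℝ (fun s' => (C.Upsilon2 t s').toReal) s₀ →
      ∃ p q : ℤ, 0 < q ∧ Int.gcd p q = 1 ∧ s₀ = (p : ℝ) / (q : ℝ) ∧
        (Odd p → q ≤ g) ∧ (Even p → q ≤ 2 * g)) :=
  upsilon2_genus_bound_general C g hgenus t
end

section
/- For the model knot complex C(T(3,4)), Υ²_{C(T(3,4)), 2/3}(s) = −2s for all s ∈ [0,2]. -/
open scoped BigOperators

/-- The staircase model complex `CFK∞(T(3,4))`: generators `a₁,a₂,a₃` of
grading 0 at levels (0,3), (1,1), (3,0) and `b₁,b₂` of grading 1 at levels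
(1,3), (3,1), with `∂b₁ = a₁ + a₂` and `∂b₂ = a₂ + a₃`. -/
def T34 : PreComplex where
  B := Fin 5
  fB := inferInstance
  dB := inferInstance
  gr := ![0, 0, 0, 1, 1]
  alg := ![0, 1, 3, 1, 3]
  alex := ![3, 1, 0, 3, 1]
  d := fun x y =>
    if (x.val = 3 ∧ (y.val = 0 ∨ y.val = 1)) ∨ (x.val = 4 ∧ (y.val = 1 ∨ y.val = 2))
    then 1 else 0

/-!
A grading-0 cycle represents the generator of `H₀` exactly when it contains an odd number of `a`'s
(a boundary contains an even number), so it contains one of `a₁, a₂, a₃`, each of which alone is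
such a cycle; hence `γ(t) = min (f_t(0,3), f_t(1,1), f_t(3,0)) = min (3t/2, 1, 3 - 3t/2)`.
Just below `t = 2/3` the minimum is attained only by `a₁`, just above only by `a₂`, so
`Z⁻ = {a₁}` and `Z⁺ = {a₂}`. Since `∂` sees only the `b`-coordinates of a chain, every chain
bounding `a₁ + a₂` contains `b₁`, at level `(1,3)`; as `f_{2/3}(1,3) = 5/3 > 1 = γ(2/3)`,
`b₁` lies in `F_{2/3,1} + F_{s,r}` exactly when `r ≥ f_s(1,3) = 1 + s`.
So `γ²(s) = 1 + s` and `Υ²(s) = -2s`.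
-/

theorem setOf_forall_small_mem_eq {α : Type*} {A : ℝ → Set α} {S : Set α} {δ₁ : ℝ}
    (hδ₁ : 0 < δ₁) (hA : ∀ δ, 0 < δ → δ < δ₁ → A δ = S) :
    {z | ∃ δ₀ > (0 : ℝ), ∀ δ : ℝ, 0 < δ → δ < δ₀ → z ∈ A δ} = S := by
  ext z
  constructor
  · rintro ⟨δ₀, hδ₀, hz⟩
    have hδ : 0 < min δ₀ δ₁ / 2 := by positivity
    rw [← hA _ hδ (by linarith [min_le_right δ₀ δ₁])]
    exact hz _ hδ (by linarith [min_le_left δ₀ δ₁])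
  · intro hz
    exact ⟨δ₁, hδ₁, fun δ hδ hδ' => (hA δ hδ hδ').symm ▸ hz⟩

theorem EReal.sInf_coe_image_Ici (r : ℝ) : sInf ((↑) '' Set.Ici r : Set EReal) = r :=
  IsLeast.csInf_eq (EReal.coe_strictMono.monotone.map_isLeast isLeast_Ici)

theorem forall_single_ne_zero_imp {ι M : Type*} [DecidableEq ι] [Zero M] {P : ι → Prop} {x : ι}
    {b : M} (hb : b ≠ 0) : (∀ y, (Pi.single x b : ι → M) y ≠ 0 → P y) ↔ P x := by
  refine ⟨fun h => h x (by simpa using hb), fun h y hy => ?_⟩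
  obtain rfl : y = x := by_contra fun hne => hy (Pi.single_eq_of_ne hne _)
  exact h

namespace PreComplex

variable {C : PreComplex}

theorem exists_ne_zero_of_genCycle {z : C.Chain} (hz : C.GenCycle z) : ∃ x, z x ≠ 0 := by
  by_contra! h
  refine hz.2.2 ⟨0, ?_⟩
  funext y
  simp [bdry, show z = 0 from funext h]

theorem inF_single_iff {t s : ℝ} {x : C.B} :
    C.inF t s (Pi.single x 1) ↔ fval t (C.lev x) ≤ s :=
  forall_single_ne_zero_imp one_ne_zero

theorem eq_single_of_genCycle_of_inF {t s : ℝ} {z : C.Chain} (hz : C.GenCycle z)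
    (hzs : C.inF t s z) {i : C.B}
    (hi : ∀ j, C.gr j = 0 → fval t (C.lev j) ≤ s → j = i) : z = Pi.single i 1 := by
  have hsupp : ∀ j, z j ≠ 0 → j = i := fun j hj => hi j (hz.2.1 j hj) (hzs j hj)
  funext j
  by_cases hji : j = i
  · subst hji
    obtain ⟨x, hx⟩ := exists_ne_zero_of_genCycle hz
    obtain rfl := hsupp x hx
    simpa using (by decide : ∀ a : ZMod 2, a ≠ 0 → a = 1) _ hx
  · simpa [hji] using mt (hsupp j) hji

end PreComplex

namespace T34

-- The basis elements `a₁, a₂, a₃, b₁, b₂` are `0, 1, 2, 3, 4`.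
instance (n : ℕ) : OfNat T34.B n := inferInstanceAs (OfNat (Fin 5) n)

theorem bdry_eq (c : T34.Chain) : T34.bdry c = ![c 3, c 3 + c 4, c 4, 0, 0] := by
  funext y
  fin_cases y <;> simp only [PreComplex.bdry] <;> erw [Fin.sum_univ_five] <;> simp [T34] <;> rfl

theorem gr_eq_zero_iff {x : T34.B} : T34.gr x = 0 ↔ x = 0 ∨ x = 1 ∨ x = 2 := by
  revert x; decide

theorem fval_lev_zero (t : ℝ) : fval t (T34.lev 0) = 3 * t / 2 := by
  show fval t (0, 3) = _
  norm_num [fval]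
  ring

theorem fval_lev_one (t : ℝ) : fval t (T34.lev 1) = 1 := by
  show fval t (1, 1) = _
  norm_num [fval]

theorem fval_lev_two (t : ℝ) : fval t (T34.lev 2) = 3 - 3 * t / 2 := by
  show fval t (3, 0) = _
  norm_num [fval]
  ring

theorem fval_lev_three (t : ℝ) : fval t (T34.lev 3) = 1 + t := by
  show fval t (1, 3) = _
  norm_num [fval]
  ring

theorem sum_eq_zero_of_isBoundary {z : T34.Chain} (hz : T34.isBoundary z) :
    z 0 + z 1 + z 2 = 0 := by
  obtain ⟨w, rfl⟩ := hz
  simp only [bdry_eq]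
  simpa using (by decide : ∀ a b : ZMod 2, a + (a + b) + b = 0) (w 3) (w 4)

theorem genCycle_single {i : T34.B} (hi : T34.gr i = 0) : T34.GenCycle (Pi.single i 1) := by
  refine ⟨?_, (forall_single_ne_zero_imp one_ne_zero).2 hi, fun hb => ?_⟩
  · funext y
    rw [bdry_eq]
    rcases gr_eq_zero_iff.1 hi with rfl | rfl | rfl <;> fin_cases y <;> rfl
  · have hsum := sum_eq_zero_of_isBoundary hb
    rcases gr_eq_zero_iff.1 hi with rfl | rfl | rfl <;> exact absurd hsum (by decide)

theorem gamma_eq (t : ℝ) : T34.gamma t = min (min (3 * t / 2) 1) (3 - 3 * t / 2) := by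
  have hlev : ∀ i : T34.B, T34.gr i = 0 →
      min (min (3 * t / 2) 1) (3 - 3 * t / 2) ≤ fval t (T34.lev i) := by
    intro i hi
    rcases gr_eq_zero_iff.1 hi with rfl | rfl | rfl
    · simp [fval_lev_zero]
    · simp [fval_lev_one]
    · simp [fval_lev_two]
  have hgen : ∀ i : T34.B, T34.gr i = 0 →
      fval t (T34.lev i) ∈ {s | ∃ z, T34.GenCycle z ∧ T34.inF t s z} :=
    fun i hi => ⟨_, genCycle_single hi, PreComplex.inF_single_iff.2 le_rfl⟩
  refine IsLeast.csInf_eq ⟨?_, ?_⟩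
  · rcases min_choice (min (3 * t / 2) 1) (3 - 3 * t / 2) with h | h <;> rw [h]
    · rcases min_choice (3 * t / 2) 1 with h' | h' <;> rw [h']
      · simpa [fval_lev_zero] using hgen 0 rfl
      · simpa [fval_lev_one] using hgen 1 rfl
    · simpa [fval_lev_two] using hgen 2 rfl
  · rintro s ⟨z, hz, hzs⟩
    obtain ⟨x, hx⟩ := PreComplex.exists_ne_zero_of_genCycle hz
    exact (hlev x (hz.2.1 x hx)).trans (hzs x hx)

theorem gamma_two_thirds : T34.gamma (2 / 3) = 1 := by
  norm_num [gamma_eq]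

theorem zminus_two_thirds : T34.Zminus (2 / 3) = {Pi.single 0 1} := by
  refine setOf_forall_small_mem_eq (δ₁ := 1) one_pos fun δ hδ _ => ?_
  have hγ : T34.gamma (2 / 3 - δ) = 1 - 3 * δ / 2 := by
    rw [gamma_eq]; simp only [min_def]; split_ifs <;> linarith
  ext z
  simp only [PreComplex.ZminusAt, hγ, Set.mem_singleton_iff]
  refine ⟨fun ⟨hz, hzs⟩ => PreComplex.eq_single_of_genCycle_of_inF hz hzs fun j hj hle => ?_,
    fun hz => hz ▸ ⟨genCycle_single rfl, PreComplex.inF_single_iff.2 ?_⟩⟩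
  · rcases gr_eq_zero_iff.1 hj with rfl | rfl | rfl
    · rfl
    · linarith [fval_lev_one (2 / 3 - δ)]
    · linarith [fval_lev_two (2 / 3 - δ)]
  · linarith [fval_lev_zero (2 / 3 - δ)]

theorem zplus_two_thirds : T34.Zplus (2 / 3) = {Pi.single 1 1} := by
  refine setOf_forall_small_mem_eq (δ₁ := 2 / 3) (by norm_num) fun δ hδ hδ' => ?_
  have hγ : T34.gamma (2 / 3 + δ) = 1 := by
    rw [gamma_eq]; simp only [min_def]; split_ifs <;> linarith
  ext z
  simp only [PreComplex.ZplusAt, hγ, Set.mem_singleton_iff]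
  refine ⟨fun ⟨hz, hzs⟩ => PreComplex.eq_single_of_genCycle_of_inF hz hzs fun j hj hle => ?_,
    fun hz => hz ▸ ⟨genCycle_single rfl, PreComplex.inF_single_iff.2 ?_⟩⟩
  · rcases gr_eq_zero_iff.1 hj with rfl | rfl | rfl
    · linarith [fval_lev_zero (2 / 3 + δ)]
    · rfl
    · linarith [fval_lev_two (2 / 3 + δ)]
  · rw [fval_lev_one]

theorem gamma2Set_two_thirds (s : ℝ) : T34.gamma2Set (2 / 3) s = Set.Ici (s + 1) := by
  ext r
  simp only [PreComplex.gamma2Set, zminus_two_thirds, zplus_two_thirds, Set.mem_singleton_iff,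
    exists_eq_left, PreComplex.sameClass, PreComplex.inRegion, gamma_two_thirds, Set.mem_Ici]
  constructor
  · rintro ⟨-, -, w, hw, hbw⟩
    have hb₁ : w 3 = 1 := by rw [bdry_eq] at hbw; exact congrFun hbw 0
    rcases hw 3 (by simp [hb₁]) with h | h
    · norm_num [fval_lev_three] at h
    · linarith [fval_lev_three s]
  · intro hr
    refine ⟨(forall_single_ne_zero_imp one_ne_zero).2 (Or.inl ?_),
      (forall_single_ne_zero_imp one_ne_zero).2 (Or.inl ?_), Pi.single 3 1,
      (forall_single_ne_zero_imp one_ne_zero).2 (Or.inr ?_), ?_⟩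
    · norm_num [fval_lev_zero]
    · rw [fval_lev_one]
    · linarith [fval_lev_three s]
    · funext y
      rw [bdry_eq]
      fin_cases y <;> rfl

end T34

/-- `Υ²_{T(3,4),2/3}(s) = −2s` for all `s ∈ [0,2]`. -/
theorem upsilon2_T34 :
    ∀ s ∈ Set.Icc (0 : ℝ) 2, T34.Upsilon2 (2 / 3) s = ((-2 * s : ℝ) : EReal) := by
  intro s _
  rw [PreComplex.Upsilon2, PreComplex.gamma2, T34.gamma2Set_two_thirds, EReal.sInf_coe_image_Ici,
    T34.gamma_two_thirds, ← EReal.coe_sub, add_sub_cancel_right, EReal.coe_mul]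
  rfl
end

section
/- Let C = C₁ ⊗ (−C₂). Then Υ_C(t) = 0 for all t ∈ [0,2], but Υ²_{C,1}(s) = −4 + 2s for s ∈ [0,1] and Υ²_{C,1}(s) = −2s for s ∈ [1,2]. In particular, the vanishing of Υ_C does not imply the vanishing of Υ²: C is detected as nontrivial by Υ². -/
open scoped BigOperators

/-- The model complex `C₁` (for `T(4,5) # −T(2,3;2,5)`, modulo acyclics):
grading-0 generators `A₁, A₂` at levels (0,2), (2,0) and a grading-1
generator `B` at level (2,2) with `∂B = A₁ + A₂`. -/
def Cone : PreComplex where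
  B := Fin 3
  fB := inferInstance
  dB := inferInstance
  gr := ![0, 0, 1]
  alg := ![0, 2, 2]
  alex := ![2, 0, 2]
  d := fun x y => if x.val = 2 ∧ (y.val = 0 ∨ y.val = 1) then 1 else 0

/-- The model complex `C₂` (for `T(2,5)`): grading-0 generators `a₁,a₂,a₃`
at levels (0,2), (1,1), (2,0) and grading-1 generators `b₁,b₂` at levels
(1,2), (2,1), with `∂b₁ = a₁ + a₂`, `∂b₂ = a₂ + a₃`. -/
def Ctwo : PreComplex where
  B := Fin 5
  fB := inferInstance
  dB := inferInstance
  gr := ![0, 0, 0, 1, 1]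
  alg := ![0, 1, 2, 1, 2]
  alex := ![2, 1, 0, 2, 1]
  d := fun x y =>
    if (x.val = 3 ∧ (y.val = 0 ∨ y.val = 1)) ∨ (x.val = 4 ∧ (y.val = 1 ∨ y.val = 2))
    then 1 else 0

/-- The model complex `−C₂` (for `−T(2,5)`): grading-0 generators
`a'₁,a'₂,a'₃` at levels (0,−2), (−1,−1), (−2,0) and grading-(−1) generators
`c₁,c₂` at levels (−1,−2), (−2,−1), with `∂a'₁ = c₁`, `∂a'₂ = c₁ + c₂`,
`∂a'₃ = c₂`. -/
def mCtwo : PreComplex where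
  B := Fin 5
  fB := inferInstance
  dB := inferInstance
  gr := ![0, 0, 0, -1, -1]
  alg := ![0, -1, -2, -1, -2]
  alex := ![-2, -1, 0, -2, -1]
  d := fun x y =>
    if (x.val = 0 ∧ y.val = 3) ∨ (x.val = 1 ∧ (y.val = 3 ∨ y.val = 4)) ∨
       (x.val = 2 ∧ y.val = 4)
    then 1 else 0

/-!
For a cycle of grading 0 in `C = C₁ ⊗ (−C₂)`, the boundary coefficients at `Aᵢ ⊗ c₁` and
`Aᵢ ⊗ c₂` say that, once the coefficients of `B ⊗ c₁` and `B ⊗ c₂` vanish, the coefficients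
along each row `Aᵢ ⊗ (a'₁, a'₂, a'₃)` are constant. The only generating cycles of that shape are
`z_A = A₁ ⊗ (a'₁ + a'₂ + a'₃)` and `z_B = A₂ ⊗ (a'₁ + a'₂ + a'₃)`, because
`z_A + z_B = ∂(B ⊗ (a'₁ + a'₂ + a'₃))`. So every generating cycle contains `B ⊗ c₁`, `B ⊗ c₂`
(levels `(1,0)`, `(0,1)`) or a generator at level `(0,0)`, whence `γ ≥ 0`, while `z_A` and `z_B`
lie in `F_{t,0}` for `t ≤ 1` and `t ≥ 1` respectively. Hence `Υ ≡ 0`, `Z⁻ = {z_A}` and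
`Z⁺ = {z_B}` at `t = 1`. A chain bounding `z_A + z_B` contains every `B ⊗ a'ⱼ`, at levels
`(2,0)`, `(1,1)`, `(0,2)`, none of which lies in `F_{1,0}`; this gives
`γ²_{C,1}(s) = max (2 − s) s`.
-/

namespace PreComplex

variable (C : PreComplex)

theorem gamma_eq_of_forall_exists_le {t s : ℝ} (hz : ∃ z, C.GenCycle z ∧ C.inF t s z)
    (hle : ∀ z, C.GenCycle z → ∃ x, z x ≠ 0 ∧ s ≤ fval t (C.lev x)) : C.gamma t = s := by
  have hlb : s ∈ lowerBounds {s' | ∃ z, C.GenCycle z ∧ C.inF t s' z} := by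
    rintro s' ⟨z, hz, hzF⟩
    obtain ⟨x, hx, hsx⟩ := hle z hz
    exact hsx.trans (hzF x hx)
  exact le_antisymm (csInf_le ⟨s, hlb⟩ hz) (le_csInf ⟨s, hz⟩ hlb)

theorem apply_eq_zero_of_inF {t s : ℝ} {z : C.Chain} (hz : C.inF t s z) {x : C.B}
    (hx : s < fval t (C.lev x)) : z x = 0 := by
  by_contra h
  exact (hz x h).not_gt hx

theorem gamma2_eq_of_gamma2Set_eq_Ici {t s m : ℝ} (h : C.gamma2Set t s = Set.Ici m) :
    C.gamma2 t s = m := by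
  rw [gamma2, h]
  refine le_antisymm (sInf_le ⟨m, Set.self_mem_Ici, rfl⟩) (le_sInf ?_)
  rintro _ ⟨r, hr, rfl⟩
  exact EReal.coe_le_coe_iff.mpr hr

theorem Upsilon2_eq_of_gamma2_eq {t s m : ℝ} (h : C.gamma2 t s = m) :
    C.Upsilon2 t s = ((-2 * (m - C.gamma t) : ℝ) : EReal) := by
  rw [Upsilon2, h, ← EReal.coe_sub, EReal.coe_mul]
  rfl

theorem bdry_smul (a : ZMod 2) (c : C.Chain) : C.bdry (a • c) = a • C.bdry c := by
  funext y
  simp [bdry, Finset.mul_sum, mul_assoc]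

theorem tensor_bdry_apply_s18 (C₁ C₂ : PreComplex) (c : (C₁.tensor C₂).Chain)
    (x : C₁.B) (y : C₂.B) :
    (C₁.tensor C₂).bdry c (x, y) =
      ∑ x', c (x', y) * C₁.d x' x + ∑ y', c (x, y') * C₂.d y' y := by
  show ∑ p : C₁.B × C₂.B, c p * ((if p.2 = y then C₁.d p.1 x else 0) +
    (if p.1 = x then C₂.d p.2 y else 0)) = _
  simp [mul_add, Finset.sum_add_distrib, mul_ite, Fintype.sum_prod_type]

end PreComplex

namespace HomKnot

open PreComplex

abbrev T : PreComplex := Cone.tensor mCtwo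

/-- `ix i j` is `gᵢ ⊗ hⱼ`, where `g = (A₁, A₂, B)` and `h = (a'₁, a'₂, a'₃, c₁, c₂)`. -/
def ix (i : Fin 3) (j : Fin 5) : T.B := ((i, j) : Fin 3 × Fin 5)

/-- `row i` is `gᵢ ⊗ (a'₁ + a'₂ + a'₃)`. -/
def row (i : Fin 3) : T.Chain :=
  fun x : Fin 3 × Fin 5 => if x.1 = i ∧ x.2.val ≤ 2 then 1 else 0

theorem row_apply (i i' : Fin 3) (j : Fin 5) :
    row i (ix i' j) = if i' = i ∧ j.val ≤ 2 then 1 else 0 :=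
  rfl

theorem bdry_ix (w : T.Chain) (i : Fin 3) (j : Fin 5) :
    T.bdry w (ix i j) =
      ∑ i' : Fin 3, w (ix i' j) * Cone.d i' i + ∑ j' : Fin 5, w (ix i j') * mCtwo.d j' j :=
  tensor_bdry_apply_s18 Cone mCtwo w i j

theorem bdry_ix_of_le_two (w : T.Chain) {i : Fin 3} (hi : i ≠ 2) {j : Fin 5} (hj : j.val ≤ 2) :
    T.bdry w (ix i j) = w (ix 2 j) := by
  rw [bdry_ix]
  fin_cases i <;> fin_cases j <;> simp_all [Fin.sum_univ_succ, Cone, mCtwo, ix]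

theorem bdry_ix_three (w : T.Chain) {i : Fin 3} (hi : i ≠ 2) :
    T.bdry w (ix i 3) = w (ix 2 3) + w (ix i 0) + w (ix i 1) := by
  rw [bdry_ix]
  fin_cases i <;> simp_all [Fin.sum_univ_succ, Cone, mCtwo, ix, add_assoc]

theorem bdry_ix_four (w : T.Chain) {i : Fin 3} (hi : i ≠ 2) :
    T.bdry w (ix i 4) = w (ix 2 4) + w (ix i 1) + w (ix i 2) := by
  rw [bdry_ix]
  fin_cases i <;> simp_all [Fin.sum_univ_succ, Cone, mCtwo, ix, add_assoc]

theorem bdry_row_two : T.bdry (row 2) = row 0 + row 1 := by decide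

theorem not_isBoundary_of_ne {z : T.Chain} (h : z (ix 0 0) ≠ z (ix 1 0)) : ¬ T.isBoundary z := by
  rintro ⟨w, rfl⟩
  rw [bdry_ix_of_le_two w (by decide) (by decide), bdry_ix_of_le_two w (by decide) (by decide)] at h
  exact h rfl

theorem forall_row_ne_zero {i : Fin 3} {P : T.B → Prop} :
    (∀ x, row i x ≠ 0 → P x) ↔ P (ix i 0) ∧ P (ix i 1) ∧ P (ix i 2) := by
  constructor
  · intro h
    exact ⟨h _ (by simp [row_apply]), h _ (by simp [row_apply]), h _ (by simp [row_apply])⟩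
  · rintro ⟨h0, h1, h2⟩ ⟨i', j⟩ hx
    obtain ⟨rfl, hj⟩ : i' = i ∧ j.val ≤ 2 := by
      by_contra h
      exact hx (if_neg h)
    fin_cases j
    exacts [h0, h1, h2, absurd hj (by decide), absurd hj (by decide)]

theorem genCycle_row {i : Fin 3} (hi : i ≠ 2) : T.GenCycle (row i) := by
  refine ⟨show T.bdry (row i) = 0 from ?_, forall_row_ne_zero.mpr ?_, not_isBoundary_of_ne ?_⟩ <;>
    fin_cases i <;> first | exact absurd rfl hi | decide

theorem fval_lev_ix (t : ℝ) (i : Fin 3) (j : Fin 5) :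
    fval t (T.lev (ix i j)) = t / 2 * ((Cone.alex i + mCtwo.alex j : ℤ) : ℝ) +
      (1 - t / 2) * ((Cone.alg i + mCtwo.alg j : ℤ) : ℝ) :=
  rfl

theorem eq_smul_row_add_smul_row {z : T.Chain} (hc : T.isCycle z) (hg : T.isGraded z 0)
    (h3 : z (ix 2 3) = 0) (h4 : z (ix 2 4) = 0) :
    z = z (ix 0 0) • row 0 + z (ix 1 0) • row 1 := by
  have hrow : ∀ i : Fin 3, i ≠ 2 → z (ix i 1) = z (ix i 0) ∧ z (ix i 2) = z (ix i 1) := by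
    intro i hi
    have e3 := congrFun hc (ix i 3)
    have e4 := congrFun hc (ix i 4)
    rw [bdry_ix_three z hi, h3, zero_add, Pi.zero_apply, CharTwo.add_eq_zero] at e3
    rw [bdry_ix_four z hi, h4, zero_add, Pi.zero_apply, CharTwo.add_eq_zero] at e4
    exact ⟨e3.symm, e4.symm⟩
  obtain ⟨h01, h02⟩ := hrow 0 (by decide)
  obtain ⟨h11, h12⟩ := hrow 1 (by decide)
  suffices ∀ i j, z (ix i j) = z (ix 0 0) * row 0 (ix i j) + z (ix 1 0) * row 1 (ix i j) from
    funext fun x => this x.1 x.2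
  intro i j
  fin_cases i <;> fin_cases j <;> simp [row_apply, h01, h02, h11, h12, h3, h4]
  all_goals exact by_contra fun hx => absurd (hg _ hx) (by decide)

theorem eq_row_zero_or_eq_row_one {z : T.Chain} (hz : T.GenCycle z) (h3 : z (ix 2 3) = 0)
    (h4 : z (ix 2 4) = 0) : z = row 0 ∨ z = row 1 := by
  obtain ⟨hc, hg, hnb⟩ := hz
  have hdecomp := eq_smul_row_add_smul_row hc hg h3 h4
  have hne : z (ix 0 0) ≠ z (ix 1 0) := by
    intro heq
    refine hnb ⟨z (ix 0 0) • row 2, ?_⟩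
    rw [bdry_smul, bdry_row_two, smul_add]
    conv_rhs => rw [hdecomp, ← heq]
  rw [hdecomp]
  rcases (by decide : ∀ a b : ZMod 2, a ≠ b → a = 1 ∧ b = 0 ∨ a = 0 ∧ b = 1) _ _ hne with
    ⟨h0, h1⟩ | ⟨h0, h1⟩ <;> simp [h0, h1]

theorem inF_row_zero {t : ℝ} (ht : t ≤ 1) : T.inF t 0 (row 0) :=
  forall_row_ne_zero.mpr (by simp [fval_lev_ix, Cone, mCtwo]; constructor <;> linarith)

theorem inF_row_one {t : ℝ} (ht : 1 ≤ t) : T.inF t 0 (row 1) :=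
  forall_row_ne_zero.mpr (by simp [fval_lev_ix, Cone, mCtwo]; constructor <;> linarith)

theorem gamma_eq_zero {t : ℝ} (h0 : 0 ≤ t) (h2 : t ≤ 2) : T.gamma t = 0 := by
  refine T.gamma_eq_of_forall_exists_le ?_ fun z hz => ?_
  · rcases le_total t 1 with ht | ht
    exacts [⟨row 0, genCycle_row (by decide), inF_row_zero ht⟩,
      ⟨row 1, genCycle_row (by decide), inF_row_one ht⟩]
  by_cases h3 : z (ix 2 3) = 0
  · by_cases h4 : z (ix 2 4) = 0
    · rcases eq_row_zero_or_eq_row_one hz h3 h4 with rfl | rfl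
      exacts [⟨ix 0 0, by decide, by simp [fval_lev_ix, Cone, mCtwo]⟩,
        ⟨ix 1 2, by decide, by simp [fval_lev_ix, Cone, mCtwo]⟩]
    · exact ⟨ix 2 4, h4, by simp [fval_lev_ix, Cone, mCtwo]; linarith⟩
  · exact ⟨ix 2 3, h3, by simp [fval_lev_ix, Cone, mCtwo]; linarith⟩

theorem gamma_one : T.gamma 1 = 0 := gamma_eq_zero zero_le_one one_le_two

theorem eq_row_zero_of_inF {t : ℝ} (h0 : 0 < t) (h1 : t < 1) {z : T.Chain} (hz : T.GenCycle z)
    (hF : T.inF t 0 z) : z = row 0 := by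
  have h3 := T.apply_eq_zero_of_inF hF (x := ix 2 3) (by simp [fval_lev_ix, Cone, mCtwo]; linarith)
  have h4 := T.apply_eq_zero_of_inF hF (x := ix 2 4) (by simp [fval_lev_ix, Cone, mCtwo]; linarith)
  refine (eq_row_zero_or_eq_row_one hz h3 h4).resolve_right ?_
  rintro rfl
  have := T.apply_eq_zero_of_inF hF (x := ix 1 0) (by simp [fval_lev_ix, Cone, mCtwo]; linarith)
  exact absurd this (by decide)

theorem eq_row_one_of_inF {t : ℝ} (h1 : 1 < t) (h2 : t < 2) {z : T.Chain} (hz : T.GenCycle z)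
    (hF : T.inF t 0 z) : z = row 1 := by
  have h3 := T.apply_eq_zero_of_inF hF (x := ix 2 3) (by simp [fval_lev_ix, Cone, mCtwo]; linarith)
  have h4 := T.apply_eq_zero_of_inF hF (x := ix 2 4) (by simp [fval_lev_ix, Cone, mCtwo]; linarith)
  refine (eq_row_zero_or_eq_row_one hz h3 h4).resolve_left ?_
  rintro rfl
  have := T.apply_eq_zero_of_inF hF (x := ix 0 2) (by simp [fval_lev_ix, Cone, mCtwo]; linarith)
  exact absurd this (by decide)

theorem mem_Zminus_one_iff {z : T.Chain} : z ∈ T.Zminus 1 ↔ z = row 0 := by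
  constructor
  · rintro ⟨δ₀, hδ₀, h⟩
    obtain ⟨δ, hδ, hδlt⟩ := exists_between (lt_min hδ₀ one_pos)
    rw [lt_min_iff] at hδlt
    obtain ⟨hz, hF⟩ := h δ hδ hδlt.1
    rw [gamma_eq_zero (by linarith) (by linarith)] at hF
    exact eq_row_zero_of_inF (by linarith) (by linarith) hz hF
  · rintro rfl
    refine ⟨1, one_pos, fun δ hδ hδ1 => ⟨genCycle_row (by decide), ?_⟩⟩
    rw [gamma_eq_zero (by linarith) (by linarith)]
    exact inF_row_zero (by linarith)

theorem mem_Zplus_one_iff {z : T.Chain} : z ∈ T.Zplus 1 ↔ z = row 1 := by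
  constructor
  · rintro ⟨δ₀, hδ₀, h⟩
    obtain ⟨δ, hδ, hδlt⟩ := exists_between (lt_min hδ₀ one_pos)
    rw [lt_min_iff] at hδlt
    obtain ⟨hz, hF⟩ := h δ hδ hδlt.1
    rw [gamma_eq_zero (by linarith) (by linarith)] at hF
    exact eq_row_one_of_inF (by linarith) (by linarith) hz hF
  · rintro rfl
    refine ⟨1, one_pos, fun δ hδ hδ1 => ⟨genCycle_row (by decide), ?_⟩⟩
    rw [gamma_eq_zero (by linarith) (by linarith)]
    exact inF_row_one (by linarith)

theorem sameClass_row_iff {s r : ℝ} : T.sameClass 1 s r (row 0) (row 1) ↔ max (2 - s) s ≤ r := by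
  constructor
  · rintro ⟨-, -, w, hw, hbdry⟩
    have key : ∀ j : Fin 5, j.val ≤ 2 → fval s (T.lev (ix 2 j)) ≤ r := by
      intro j hj
      have hwj : w (ix 2 j) ≠ 0 := by
        rw [← bdry_ix_of_le_two w (by decide : (0 : Fin 3) ≠ 2) hj, hbdry]
        fin_cases j <;> simp_all [row_apply]
      refine (hw _ hwj).resolve_left ?_
      rw [gamma_one]
      fin_cases j <;> simp [fval_lev_ix, Cone, mCtwo] <;> norm_num
    have k0 := key 0 (by decide)
    have k2 := key 2 (by decide)
    simp [fval_lev_ix, Cone, mCtwo] at k0 k2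
    exact max_le (by linarith) (by linarith)
  · intro hr
    rw [max_le_iff] at hr
    refine ⟨fun x hx => Or.inl ?_, fun x hx => Or.inl ?_, row 2, ?_, bdry_row_two⟩
    · rw [gamma_one]; exact inF_row_zero le_rfl x hx
    · rw [gamma_one]; exact inF_row_one le_rfl x hx
    · refine forall_row_ne_zero.mpr ⟨Or.inr ?_, Or.inr ?_, Or.inr ?_⟩ <;>
        simp [fval_lev_ix, Cone, mCtwo] <;> linarith

theorem gamma2Set_one (s : ℝ) : T.gamma2Set 1 s = Set.Ici (max (2 - s) s) := by
  ext r
  simp only [gamma2Set, mem_Zminus_one_iff, mem_Zplus_one_iff, Set.mem_ofPred_eq, exists_eq_left,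
    Set.mem_Ici, sameClass_row_iff]

end HomKnot

/-- for `C = C₁ ⊗ (−C₂)` (a model for Hom's knot
`T(4,5) # −T(2,3;2,5) # −T(2,5)` modulo acyclics), `Υ_C ≡ 0` but
`Υ²_{C,1}(s) = −4 + 2s` on `[0,1]` and `= −2s` on `[1,2]`. -/
theorem upsilon2_Hom_knot :
    (∀ t ∈ Set.Icc (0 : ℝ) 2, (Cone.tensor mCtwo).Upsilon t = 0) ∧
    (∀ s ∈ Set.Icc (0 : ℝ) 1,
        (Cone.tensor mCtwo).Upsilon2 1 s = ((-4 + 2 * s : ℝ) : EReal)) ∧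
    (∀ s ∈ Set.Icc (1 : ℝ) 2,
        (Cone.tensor mCtwo).Upsilon2 1 s = ((-2 * s : ℝ) : EReal)) := by
  have hΥ2 (s : ℝ) : (Cone.tensor mCtwo).Upsilon2 1 s = ((-2 * max (2 - s) s : ℝ) : EReal) := by
    rw [PreComplex.Upsilon2_eq_of_gamma2_eq _
      (PreComplex.gamma2_eq_of_gamma2Set_eq_Ici _ (HomKnot.gamma2Set_one s)), HomKnot.gamma_one,
      sub_zero]
  refine ⟨fun t ht => ?_, fun s hs => ?_, fun s hs => ?_⟩
  · rw [PreComplex.Upsilon, HomKnot.gamma_eq_zero ht.1 ht.2, mul_zero]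
  · rw [hΥ2, max_eq_left (by linarith [hs.2])]
    congr 1
    ring
  · rw [hΥ2, max_eq_right (by linarith [hs.1])]
end
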